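/- arXiv:2311.09021 — 3 statements merged into one kernel-verified Lean document; each statement's English description precedes it below -/
import Mathlib

section
/- Let 1 ≤ p ≤ q < ∞, let k ≥ 1, and let M > 0. Suppose that for every n ≥ k, every function f : {-1,1}^n → ℝ of degree at most k satisfies ‖f‖_q ≤ M ‖f‖_p. Then for every n ≥ k and every function f : {-1,1}^n → ℝ, inf_{g ∈ P_{>k}^n} ‖f − g‖_{p*} ≤ M · inf_{g ∈ P_{>k}^n} ‖f − g‖_{q*}, where r* denotes the conjugate exponent of r ∈ [1,∞], i.e. 1/r* + 1/r = 1. -/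
open Finset
open scoped ENNReal

noncomputable section

/-- The Walsh function `w_S` on the discrete cube `{-1,1}^n`, where a point of the cube is
encoded as `x : Fin n → Bool`, a coordinate `b : Bool` representing the real number
`if b then 1 else -1`. -/
def walsh (n : ℕ) (S : Finset (Fin n)) (x : Fin n → Bool) : ℝ :=
  ∏ i ∈ S, (if x i then (1 : ℝ) else -1)

/-- The Fourier--Walsh coefficient `f̂(S) = E[f ⬝ w_S]`. -/
def walshCoeff {n : ℕ} (f : (Fin n → Bool) → ℝ) (S : Finset (Fin n)) : ℝ :=
  (∑ x : Fin n → Bool, f x * walsh n S x) / 2 ^ n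

/-- The mean `E f` of `f` with respect to the uniform probability measure on the cube. -/
def cubeMean {n : ℕ} (f : (Fin n → Bool) → ℝ) : ℝ :=
  (∑ x : Fin n → Bool, f x) / 2 ^ n

/-- The `L_r` norm (`r ∈ [1,∞]`, encoded as `r : ℝ≥0∞`) of `f : {-1,1}^n → ℝ` with respect to
the uniform probability measure; `r = ∞` gives the sup norm. -/
def cubeNorm {n : ℕ} (r : ℝ≥0∞) (f : (Fin n → Bool) → ℝ) : ℝ :=
  if r = ⊤ then Finset.univ.sup' Finset.univ_nonempty (fun x => |f x|)
  else ((∑ x : Fin n → Bool, |f x| ^ r.toReal) / 2 ^ n) ^ (1 / r.toReal)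

/-- `f ∈ 𝒫_I^n`: the Fourier--Walsh spectrum of `f` is contained in `I`. -/
def spectrumIn {n : ℕ} (f : (Fin n → Bool) → ℝ) (I : Set ℕ) : Prop :=
  ∀ S : Finset (Fin n), S.card ∉ I → walshCoeff f S = 0

/-- The `L_r` distance of `f` from the tail space `𝒫_{>k}^n`. -/
def distFromTail {n : ℕ} (k : ℕ) (r : ℝ≥0∞) (f : (Fin n → Bool) → ℝ) : ℝ :=
  sInf {t : ℝ | ∃ g : (Fin n → Bool) → ℝ,
    spectrumIn g {j | k < j} ∧ t = cubeNorm r (fun x => f x - g x)}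

/-- The coefficient `c(k,ℓ)` of `x^ℓ` in the `k`-th Chebyshev polynomial of the first kind. -/
def chebC (k ℓ : ℕ) : ℝ := (Polynomial.Chebyshev.T ℝ k).coeff ℓ

/-- The modified Chebyshev coefficient `c̃(k,ℓ)`. -/
def chebCt (k ℓ : ℕ) : ℝ := if Even (k - ℓ) then chebC k ℓ else chebC (k - 1) ℓ

/-- The `ℓ`-th elementary symmetric multilinear polynomial on `{-1,1}^n`. -/
def elemSymPoly (n ℓ : ℕ) (x : Fin n → Bool) : ℝ :=
  ∑ S ∈ Finset.powersetCard ℓ (Finset.univ : Finset (Fin n)), walsh n S x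

/-- The level-`ℓ` Rademacher projection `Rad_ℓ f`. -/
def radProj {n : ℕ} (ℓ : ℕ) (f : (Fin n → Bool) → ℝ) (x : Fin n → Bool) : ℝ :=
  ∑ S ∈ Finset.powersetCard ℓ (Finset.univ : Finset (Fin n)), walshCoeff f S * walsh n S x

lemma walsh_update_not_mem {n : ℕ} {S : Finset (Fin n)} {i : Fin n} (hi : i ∉ S)
    (x : Fin n → Bool) (b : Bool) : walsh n S (Function.update x i b) = walsh n S x :=
  Finset.prod_congr rfl fun j hj => by
    rw [Function.update_of_ne (by rintro rfl; exact hi hj)]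

lemma walsh_update_flip {n : ℕ} {S : Finset (Fin n)} {i : Fin n} (hi : i ∈ S)
    (x : Fin n → Bool) : walsh n S (Function.update x i (!(x i))) = -walsh n S x := by
  have key : ∀ y : Fin n → Bool, walsh n S y
      = (if y i then (1:ℝ) else -1) * ∏ j ∈ S.erase i, (if y j then (1:ℝ) else -1) :=
    fun y => (Finset.mul_prod_erase S _ hi).symm
  have h2 : (∏ j ∈ S.erase i, (if Function.update x i (!(x i)) j then (1:ℝ) else -1))
      = ∏ j ∈ S.erase i, (if x j then (1:ℝ) else -1) :=
    Finset.prod_congr rfl fun j hj => by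
      rw [Function.update_of_ne (Finset.ne_of_mem_erase hj)]
  rw [key, key x, h2, Function.update_self]
  cases hx : x i <;> simp

lemma sum_walsh_mul_eq_zero {n : ℕ} {S T : Finset (Fin n)} (hST : S ≠ T) :
    ∑ x : Fin n → Bool, walsh n S x * walsh n T x = 0 := by
  obtain ⟨i, hi⟩ : ∃ i, (i ∈ S ∧ i ∉ T) ∨ (i ∈ T ∧ i ∉ S) := by
    by_contra hc
    push_neg at hc
    exact hST (Finset.ext fun i => by have := hc i; tauto)
  refine Finset.sum_ninvolution (fun x => Function.update x i (!(x i))) ?_ ?_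
    (fun x => Finset.mem_univ _) ?_
  · intro x
    rcases hi with ⟨h1, h2⟩ | ⟨h1, h2⟩
    · rw [walsh_update_flip h1, walsh_update_not_mem h2]; ring
    · rw [walsh_update_flip h1, walsh_update_not_mem h2]; ring
  · intro x _ hx
    have := congrFun hx i
    simp at this
  · intro x
    funext j
    rcases eq_or_ne j i with rfl | hji
    · simp
    · simp [Function.update_of_ne hji]

lemma walshCoeff_walsh_ne {n : ℕ} {S T : Finset (Fin n)} (hST : S ≠ T) :
    walshCoeff (walsh n S) T = 0 := by
  unfold walshCoeff
  rw [sum_walsh_mul_eq_zero hST, zero_div]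

lemma spectrumIn_walsh {n k : ℕ} {S : Finset (Fin n)} (hS : k < S.card) :
    spectrumIn (walsh n S) {j | k < j} := fun T hT =>
  walshCoeff_walsh_ne (by rintro rfl; exact hT hS)

lemma walshCoeff_add' {n : ℕ} (f g : (Fin n → Bool) → ℝ) (S : Finset (Fin n)) :
    walshCoeff (fun x => f x + g x) S = walshCoeff f S + walshCoeff g S := by
  unfold walshCoeff
  rw [← add_div, ← Finset.sum_add_distrib]
  congr 1
  exact Finset.sum_congr rfl fun x _ => by ring

lemma walshCoeff_smul' {n : ℕ} (c : ℝ) (f : (Fin n → Bool) → ℝ) (S : Finset (Fin n)) :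
    walshCoeff (fun x => c * f x) S = c * walshCoeff f S := by
  unfold walshCoeff
  rw [← mul_div_assoc, Finset.mul_sum]
  congr 1
  exact Finset.sum_congr rfl fun x _ => by ring

lemma walshCoeff_zero' {n : ℕ} (S : Finset (Fin n)) :
    walshCoeff (fun _ => (0:ℝ)) S = 0 := by
  unfold walshCoeff
  simp

def tailSub (n k : ℕ) (r : ℝ≥0∞) : Submodule ℝ (PiLp r fun _ : Fin n → Bool => ℝ) where
  carrier := {g | spectrumIn g {j | k < j}}
  add_mem' := fun {a b} ha hb S hS => by
    have h := walshCoeff_add' (fun x => a x) (fun x => b x) S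
    show walshCoeff (a + b) S = 0
    calc walshCoeff (a + b) S = walshCoeff (fun x => a x + b x) S := rfl
    _ = walshCoeff (fun x => a x) S + walshCoeff (fun x => b x) S := h
    _ = 0 := by rw [ha S hS, hb S hS, add_zero]
  zero_mem' := fun S hS => by
    show walshCoeff 0 S = 0
    calc walshCoeff (0 : PiLp r fun _ : Fin n → Bool => ℝ) S
        = walshCoeff (fun _ => (0:ℝ)) S := rfl
    _ = 0 := walshCoeff_zero' S
  smul_mem' := fun c {a} ha S hS => by
    have h := walshCoeff_smul' c (fun x => a x) S
    show walshCoeff (c • a) S = 0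
    calc walshCoeff (c • a) S = walshCoeff (fun x => c * a x) S := rfl
    _ = c * walshCoeff (fun x => a x) S := h
    _ = 0 := by rw [ha S hS, mul_zero]

def toLp {n : ℕ} (r : ℝ≥0∞) (u : (Fin n → Bool) → ℝ) :
    PiLp r (fun _ : Fin n → Bool => ℝ) := WithLp.toLp r u

lemma cubeNorm_nonneg {n : ℕ} (r : ℝ≥0∞) (f : (Fin n → Bool) → ℝ) : 0 ≤ cubeNorm r f := by
  unfold cubeNorm
  split
  · exact le_trans (abs_nonneg (f (fun _ => false)))
      (Finset.le_sup' (fun x => |f x|) (Finset.mem_univ _))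
  · positivity

lemma cubeNorm_ofReal {n : ℕ} {q : ℝ} (hq : 0 < q) (f : (Fin n → Bool) → ℝ) :
    cubeNorm (ENNReal.ofReal q) f = ((∑ x : Fin n → Bool, |f x| ^ q) / 2 ^ n) ^ (1/q) := by
  rw [cubeNorm, if_neg ENNReal.ofReal_ne_top, ENNReal.toReal_ofReal hq.le]

instance factOneLeTop : Fact ((1:ℝ≥0∞) ≤ ⊤) := ⟨le_top⟩

lemma pilp_norm_top {n : ℕ} (u : (Fin n → Bool) → ℝ) :
    ‖toLp (n := n) ⊤ u‖ = cubeNorm ⊤ u := by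
  rw [cubeNorm, if_pos rfl, PiLp.norm_eq_ciSup, ← Finset.sup'_univ_eq_ciSup]
  exact Finset.sup'_congr _ rfl fun x _ => Real.norm_eq_abs _

lemma pilp_norm_ne_top {n : ℕ} {r : ℝ≥0∞} [Fact (1 ≤ r)] (hr : r ≠ ⊤)
    (u : (Fin n → Bool) → ℝ) :
    ‖toLp r u‖ = ((2:ℝ)^n) ^ (1/r.toReal) * cubeNorm r u := by
  have hr0 : r ≠ 0 := by
    have : (1:ℝ≥0∞) ≤ r := Fact.out
    exact fun h => by simp [h] at this
  have ht : 0 < r.toReal := ENNReal.toReal_pos hr0 hr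
  rw [PiLp.norm_eq_sum ht, cubeNorm, if_neg hr,
    Real.div_rpow (by positivity) (by positivity)]
  rw [mul_comm, div_mul_cancel₀]
  · exact congrArg (· ^ (1/r.toReal)) (Finset.sum_congr rfl fun x _ => by
      show ‖u x‖ ^ r.toReal = |u x| ^ r.toReal
      rw [Real.norm_eq_abs])
  · positivity

lemma conj_cases {p : ℝ} (hp : 1 ≤ p) {r : ℝ≥0∞} (h : (ENNReal.ofReal p)⁻¹ + r⁻¹ = 1) :
    (p = 1 ∧ r = ⊤) ∨ (r ≠ ⊤ ∧ Real.HolderConjugate p r.toReal) := by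
  rcases eq_or_lt_of_le hp with h1 | h1
  · left
    refine ⟨h1.symm, ?_⟩
    rw [← h1, ENNReal.ofReal_one, inv_one] at h
    have h2 : (1:ℝ≥0∞) + r⁻¹ = 1 + 0 := by rw [add_zero]; exact h
    have h3 : r⁻¹ = 0 := (ENNReal.add_right_inj ENNReal.one_ne_top).mp h2
    simpa [ENNReal.inv_eq_zero] using h3
  · right
    have hc := Real.HolderConjugate.conjExponent h1
    have h2 := hc.inv_add_inv_ennreal
    have hfin : (ENNReal.ofReal p)⁻¹ ≠ ⊤ := by
      have hp0 : 0 < p := lt_trans zero_lt_one h1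
      simp [ENNReal.ofReal_pos.mpr hp0, hp0]
    have h3 : r⁻¹ = (ENNReal.ofReal p.conjExponent)⁻¹ :=
      (ENNReal.add_right_inj hfin).mp (h.trans h2.symm)
    have h4 : r = ENNReal.ofReal p.conjExponent := by
      rw [← inv_inv r, h3, inv_inv]
    refine ⟨by simp [h4, ENNReal.ofReal_ne_top], ?_⟩
    rw [h4, ENNReal.toReal_ofReal hc.symm.nonneg]
    exact hc

lemma one_le_conj {p : ℝ} (hp : 1 ≤ p) {r : ℝ≥0∞}
    (h : (ENNReal.ofReal p)⁻¹ + r⁻¹ = 1) : 1 ≤ r :=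
  by
    haveI : ENNReal.HolderConjugate (ENNReal.ofReal p) r := ENNReal.holderConjugate_iff.mpr h
    exact ENNReal.HolderConjugate.one_le r (ENNReal.ofReal p)

lemma cube_holder {n : ℕ} {q : ℝ} (hq : 1 ≤ q) {r : ℝ≥0∞} [Fact (1 ≤ r)]
    (hconj : (ENNReal.ofReal q)⁻¹ + r⁻¹ = 1) (w v : (Fin n → Bool) → ℝ) :
    ∑ x : Fin n → Bool, w x * v x
      ≤ ‖toLp r w‖ * (∑ x : Fin n → Bool, |v x| ^ q) ^ (1/q) := by
  rcases conj_cases hq hconj with ⟨hq1, htop⟩ | ⟨hne, hcj⟩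
  · subst htop
    subst hq1
    have hw : ∀ x : Fin n → Bool, |w x| ≤ ‖toLp ⊤ w‖ := by
      intro x
      rw [PiLp.norm_eq_ciSup]
      exact le_ciSup (f := fun y => ‖toLp (n := n) ⊤ w y‖)
        (Set.Finite.bddAbove (Set.finite_range _)) x
    calc ∑ x : Fin n → Bool, w x * v x ≤ ∑ x : Fin n → Bool, |w x| * |v x| :=
          Finset.sum_le_sum fun x _ => (le_abs_self _).trans (le_of_eq (abs_mul _ _))
    _ ≤ ∑ x : Fin n → Bool, ‖toLp ⊤ w‖ * |v x| :=
          Finset.sum_le_sum fun x _ => mul_le_mul_of_nonneg_right (hw x) (abs_nonneg _)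
    _ = ‖toLp ⊤ w‖ * ∑ x : Fin n → Bool, |v x| := by rw [← Finset.mul_sum]
    _ = _ := by simp [Real.rpow_one]
  · have hcs := hcj.symm
    have key := Real.inner_le_Lp_mul_Lq (Finset.univ) w v hcs
    have hnorm : ‖toLp r w‖ = (∑ x : Fin n → Bool, |w x| ^ r.toReal) ^ (1/r.toReal) := by
      rw [PiLp.norm_eq_sum hcs.pos]
      exact congrArg (· ^ (1/r.toReal)) (Finset.sum_congr rfl fun x _ => by
        show ‖w x‖ ^ r.toReal = |w x| ^ r.toReal
        rw [Real.norm_eq_abs])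
    rw [hnorm]
    exact key

lemma dual_norm_bound {n : ℕ} {p : ℝ} (hp : 1 ≤ p) {r : ℝ≥0∞} [Fact (1 ≤ r)]
    (hconj : (ENNReal.ofReal p)⁻¹ + r⁻¹ = 1) (h : (Fin n → Bool) → ℝ)
    (hb : ∀ u : (Fin n → Bool) → ℝ, |∑ x : Fin n → Bool, u x * h x| ≤ ‖toLp r u‖) :
    (∑ x : Fin n → Bool, |h x| ^ p) ^ (1/p) ≤ 1 := by
  rcases conj_cases hp hconj with ⟨hp1, htop⟩ | ⟨hne, hcj⟩
  · subst htop
    subst hp1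
    have key : ∑ x : Fin n → Bool, |h x| ≤ 1 := by
      set u : (Fin n → Bool) → ℝ := fun x => if h x < 0 then -1 else 1 with hu
      have h1 : ∑ x : Fin n → Bool, u x * h x = ∑ x : Fin n → Bool, |h x| :=
        Finset.sum_congr rfl fun x _ => by
          by_cases hx : h x < 0
          · rw [hu]; simp only [if_pos hx]; rw [abs_of_neg hx]; ring
          · rw [hu]; simp only [if_neg hx]; rw [abs_of_nonneg (not_lt.mp hx)]; ring
      have h2 : ‖toLp (n := n) ⊤ u‖ ≤ 1 := by
        rw [PiLp.norm_eq_ciSup]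
        refine ciSup_le fun x => ?_
        show ‖u x‖ ≤ 1
        rw [hu, Real.norm_eq_abs]
        by_cases hx : h x < 0 <;> simp [hx]
      calc ∑ x : Fin n → Bool, |h x| = |∑ x : Fin n → Bool, u x * h x| := by
            rw [h1, abs_of_nonneg (Finset.sum_nonneg fun x _ => abs_nonneg _)]
      _ ≤ ‖toLp ⊤ u‖ := hb u
      _ ≤ 1 := h2
    calc (∑ x : Fin n → Bool, |h x| ^ (1:ℝ)) ^ (1/(1:ℝ))
        = ∑ x : Fin n → Bool, |h x| := by simp [Real.rpow_one]
    _ ≤ 1 := key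
  · have ht : 0 < r.toReal := hcj.symm.pos
    set A := ∑ x : Fin n → Bool, |h x| ^ p with hA
    have hA0 : 0 ≤ A := Finset.sum_nonneg fun x _ => Real.rpow_nonneg (abs_nonneg _) _
    set u : (Fin n → Bool) → ℝ := fun x => (if h x < 0 then -1 else 1) * |h x| ^ (p - 1)
      with hu
    have h1 : ∑ x : Fin n → Bool, u x * h x = A := by
      refine Finset.sum_congr rfl fun x _ => ?_
      rw [hu]
      rcases lt_trichotomy (h x) 0 with hx | hx | hx
      · simp only [if_pos hx]
        rw [abs_of_neg hx, show (-1 : ℝ) * (-h x) ^ (p-1) * h x = (-h x) ^ (p-1) * (-h x) ^ (1:ℝ)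
            from by rw [Real.rpow_one]; ring,
          ← Real.rpow_add (neg_pos.mpr hx), sub_add_cancel]
      · simp [hx, Real.zero_rpow (by linarith [hcj.lt] : p ≠ 0)]
      · simp only [if_neg (not_lt.mpr hx.le)]
        rw [abs_of_pos hx, show (1 : ℝ) * h x ^ (p-1) * h x = h x ^ (p-1) * h x ^ (1:ℝ)
            from by rw [Real.rpow_one]; ring,
          ← Real.rpow_add hx, sub_add_cancel]
    have h2 : ‖toLp r u‖ = A ^ (1/r.toReal) := by
      rw [PiLp.norm_eq_sum ht]
      congr 1
      refine Finset.sum_congr rfl fun x _ => ?_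
      show ‖u x‖ ^ r.toReal = |h x| ^ p
      rw [Real.norm_eq_abs, hu]
      simp only [abs_mul]
      rw [abs_of_nonneg (Real.rpow_nonneg (abs_nonneg _) _),
        show |if h x < 0 then (-1:ℝ) else 1| = 1 from by by_cases hx : h x < 0 <;> simp [hx],
        one_mul, ← Real.rpow_mul (abs_nonneg _), hcj.sub_one_mul_conj]
    have key : A ≤ A ^ (1/r.toReal) := by
      calc A = |∑ x : Fin n → Bool, u x * h x| := by rw [h1, abs_of_nonneg hA0]
      _ ≤ ‖toLp r u‖ := hb u
      _ = A ^ (1/r.toReal) := h2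
    rcases eq_or_lt_of_le hA0 with h0 | h0
    · rw [← h0, Real.zero_rpow (by positivity : 1/p ≠ 0)]
      exact zero_le_one
    · have hexp : 1/p = 1 - 1/r.toReal := by
        have := hcj.inv_add_inv_eq_one
        rw [one_div, one_div]
        linarith
      rw [hexp, Real.rpow_sub h0, Real.rpow_one]
      exact (div_le_one (Real.rpow_pos_of_pos h0 _)).mpr key

/-- the moment comparison inequality for degree-at-most-`k` polynomials implies
the dual inequality for distances from the tail space `𝒫_{>k}^n`, with conjugate exponents. -/
theorem stmt_0 (p q : ℝ) (hp : 1 ≤ p) (hpq : p ≤ q) (k : ℕ) (hk : 1 ≤ k)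
    (M : ℝ) (hM : 0 < M) (pstar qstar : ℝ≥0∞)
    (hps : (ENNReal.ofReal p)⁻¹ + pstar⁻¹ = 1)
    (hqs : (ENNReal.ofReal q)⁻¹ + qstar⁻¹ = 1)
    (hmom : ∀ n : ℕ, k ≤ n → ∀ f : (Fin n → Bool) → ℝ,
      spectrumIn f {j | j ≤ k} →
      cubeNorm (ENNReal.ofReal q) f ≤ M * cubeNorm (ENNReal.ofReal p) f) :
    ∀ n : ℕ, k ≤ n → ∀ f : (Fin n → Bool) → ℝ,
      distFromTail k pstar f ≤ M * distFromTail k qstar f := by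
  intro n hn f
  haveI hfp : Fact (1 ≤ pstar) := ⟨one_le_conj hp hps⟩
  haveI hfq : Fact (1 ≤ qstar) := ⟨one_le_conj (hp.trans hpq) hqs⟩
  have hq1 : 1 ≤ q := hp.trans hpq
  have hp0 : 0 < p := lt_of_lt_of_le zero_lt_one hp
  have hq0 : 0 < q := lt_of_lt_of_le zero_lt_one hq1
  have hB : (0:ℝ) < 2 ^ n := by positivity
  have hnormp : ∀ u : (Fin n → Bool) → ℝ,
      ‖toLp pstar u‖ = ((2:ℝ)^n) ^ (1 - 1/p) * cubeNorm pstar u := by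
    rcases conj_cases hp hps with ⟨hp1, htop⟩ | ⟨hne, hcj⟩
    · subst htop
      intro u
      rw [pilp_norm_top, hp1]
      norm_num
    · intro u
      rw [pilp_norm_ne_top hne]
      congr 2
      have := hcj.inv_add_inv_eq_one
      rw [one_div, one_div]
      linarith
  have hnormq : ∀ u : (Fin n → Bool) → ℝ,
      ‖toLp qstar u‖ = ((2:ℝ)^n) ^ (1 - 1/q) * cubeNorm qstar u := by
    rcases conj_cases hq1 hqs with ⟨hq1', htop⟩ | ⟨hne, hcj⟩
    · subst htop
      intro u
      rw [pilp_norm_top, hq1']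
      norm_num
    · intro u
      rw [pilp_norm_ne_top hne]
      congr 2
      have := hcj.inv_add_inv_eq_one
      rw [one_div, one_div]
      linarith
  haveI hcl : IsClosed ((tailSub n k pstar :
      Submodule ℝ (PiLp pstar fun _ : Fin n → Bool => ℝ)) :
      Set (PiLp pstar fun _ : Fin n → Bool => ℝ)) :=
    Submodule.closed_of_finiteDimensional _
  obtain ⟨ψ, hψnorm, hψval⟩ :=
    exists_dual_vector'' ℝ (Submodule.Quotient.mk (toLp pstar f) :
      (PiLp pstar fun _ : Fin n → Bool => ℝ) ⧸ tailSub n k pstar)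
  set G : (PiLp pstar fun _ : Fin n → Bool => ℝ) →ₗ[ℝ] ℝ :=
    ψ.toLinearMap.comp (tailSub n k pstar).mkQ with hG
  set h : (Fin n → Bool) → ℝ :=
    fun x => G (toLp pstar (fun y => if x = y then 1 else 0)) with hh
  have hrep : ∀ u : (Fin n → Bool) → ℝ,
      ψ (Submodule.Quotient.mk (toLp pstar u)) = ∑ x : Fin n → Bool, u x * h x := by
    intro u
    calc ψ (Submodule.Quotient.mk (toLp pstar u)) = G (toLp pstar u) := rfl
    _ = G (∑ x : Fin n → Bool, u x • toLp pstar (fun y => if x = y then (1:ℝ) else 0)) := by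
        congr 1
        apply WithLp.ofLp_injective
        simp only [toLp, WithLp.ofLp_sum, WithLp.ofLp_smul]
        exact pi_eq_sum_univ u
    _ = ∑ x : Fin n → Bool, u x * h x := by
        rw [map_sum]
        exact Finset.sum_congr rfl fun x _ => by rw [map_smul, smul_eq_mul]
  have hvanish : ∀ g : (Fin n → Bool) → ℝ, spectrumIn g {j | k < j} →
      ∑ x : Fin n → Bool, g x * h x = 0 := by
    intro g hg
    rw [← hrep g]
    have hz : (Submodule.Quotient.mk (toLp pstar g) :
        (PiLp pstar fun _ : Fin n → Bool => ℝ) ⧸ tailSub n k pstar) = 0 :=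
      (Submodule.Quotient.mk_eq_zero _).mpr (show toLp pstar g ∈ tailSub n k pstar from hg)
    rw [hz, map_zero]
  have hspec : spectrumIn h {j | j ≤ k} := by
    intro S hS
    have hSk : k < S.card := lt_of_not_ge (by simpa using hS)
    have hw := hvanish (walsh n S) (spectrumIn_walsh hSk)
    unfold walshCoeff
    rw [show (∑ x : Fin n → Bool, h x * walsh n S x)
        = ∑ x : Fin n → Bool, walsh n S x * h x from
      Finset.sum_congr rfl fun x _ => mul_comm _ _, hw, zero_div]
  have hdual : ∀ u : (Fin n → Bool) → ℝ,
      |∑ x : Fin n → Bool, u x * h x| ≤ ‖toLp pstar u‖ := by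
    intro u
    rw [← hrep u]
    calc |ψ (Submodule.Quotient.mk (toLp pstar u))|
        ≤ ‖ψ‖ * ‖(Submodule.Quotient.mk (toLp pstar u) :
            (PiLp pstar fun _ : Fin n → Bool => ℝ) ⧸ tailSub n k pstar)‖ := by
          simpa [Real.norm_eq_abs] using ψ.le_opNorm _
    _ ≤ 1 * ‖toLp pstar u‖ :=
          mul_le_mul hψnorm (Submodule.Quotient.norm_mk_le _ _) (norm_nonneg _) zero_le_one
    _ = ‖toLp pstar u‖ := one_mul _
  have hGb : (∑ x : Fin n → Bool, |h x| ^ p) ^ (1/p) ≤ 1 := dual_norm_bound hp hps h hdual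
  have hmom' := hmom n hn h hspec
  rw [cubeNorm_ofReal hq0, cubeNorm_ofReal hp0,
    Real.div_rpow (by positivity) (by positivity),
    Real.div_rpow (by positivity) (by positivity)] at hmom'
  have hq_bound : (∑ x : Fin n → Bool, |h x| ^ q) ^ (1/q)
      ≤ M * (((2:ℝ)^n) ^ (1/q) / ((2:ℝ)^n) ^ (1/p)) := by
    rw [div_le_iff₀ (by positivity)] at hmom'
    calc (∑ x : Fin n → Bool, |h x| ^ q) ^ (1/q)
        ≤ M * ((∑ x : Fin n → Bool, |h x| ^ p) ^ (1/p) / ((2:ℝ)^n) ^ (1/p))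
            * ((2:ℝ)^n) ^ (1/q) := hmom'
    _ ≤ M * ((1:ℝ) / ((2:ℝ)^n) ^ (1/p)) * ((2:ℝ)^n) ^ (1/q) := by gcongr
    _ = M * (((2:ℝ)^n) ^ (1/q) / ((2:ℝ)^n) ^ (1/p)) := by ring
  have hc : (0:ℝ) < ((2:ℝ)^n) ^ (1 - 1/p) := Real.rpow_pos_of_pos hB _
  have hD : distFromTail k pstar f
      ≤ ‖(Submodule.Quotient.mk (toLp pstar f) :
          (PiLp pstar fun _ : Fin n → Bool => ℝ) ⧸ tailSub n k pstar)‖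
        / ((2:ℝ)^n) ^ (1 - 1/p) := by
    refine le_of_forall_pos_le_add fun ε hε => ?_
    obtain ⟨m, hm, hmlt⟩ := Submodule.Quotient.norm_mk_lt
      (Submodule.Quotient.mk (toLp pstar f) :
        (PiLp pstar fun _ : Fin n → Bool => ℝ) ⧸ tailSub n k pstar) (mul_pos hε hc)
    have hmem : toLp pstar f - m ∈ tailSub n k pstar := by
      rw [← Submodule.Quotient.eq]
      exact hm.symm
    have hle : distFromTail k pstar f
        ≤ cubeNorm pstar (fun x => f x - (f x - m x)) := by
      apply csInf_le
      · exact ⟨0, fun t ⟨g', hg', ht⟩ => ht ▸ cubeNorm_nonneg _ _⟩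
      · exact ⟨fun x => f x - m x, hmem, rfl⟩
    have heq : (fun x => f x - (f x - m x)) = fun x => m x := by funext x; ring
    rw [heq] at hle
    have h6 : ‖toLp pstar (fun x => m x)‖ = ‖m‖ := rfl
    have hnm : cubeNorm pstar (fun x => m x) = ‖m‖ / ((2:ℝ)^n) ^ (1 - 1/p) := by
      rw [← h6, hnormp (fun x => m x)]
      exact (mul_div_cancel_left₀ _ (ne_of_gt hc)).symm
    calc distFromTail k pstar f ≤ cubeNorm pstar (fun x => m x) := hle
    _ = ‖m‖ / ((2:ℝ)^n) ^ (1 - 1/p) := hnm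
    _ ≤ (‖(Submodule.Quotient.mk (toLp pstar f) :
          (PiLp pstar fun _ : Fin n → Bool => ℝ) ⧸ tailSub n k pstar)‖
          + ε * ((2:ℝ)^n) ^ (1 - 1/p)) / ((2:ℝ)^n) ^ (1 - 1/p) := by gcongr
    _ = ‖(Submodule.Quotient.mk (toLp pstar f) :
          (PiLp pstar fun _ : Fin n → Bool => ℝ) ⧸ tailSub n k pstar)‖
          / ((2:ℝ)^n) ^ (1 - 1/p) + ε := by field_simp
  have hpow : ((2:ℝ)^n) ^ (1 - 1/q) * (((2:ℝ)^n) ^ (1/q) / ((2:ℝ)^n) ^ (1/p))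
      = ((2:ℝ)^n) ^ (1 - 1/p) := by
    rw [← Real.rpow_sub hB, ← Real.rpow_add hB]
    congr 1
    ring
  have hkey : ∀ g : (Fin n → Bool) → ℝ, spectrumIn g {j | k < j} →
      distFromTail k pstar f ≤ M * cubeNorm qstar (fun x => f x - g x) := by
    intro g hg
    have hstep2 : ‖(Submodule.Quotient.mk (toLp pstar f) :
        (PiLp pstar fun _ : Fin n → Bool => ℝ) ⧸ tailSub n k pstar)‖
        = ∑ x : Fin n → Bool, f x * h x := hψval.symm.trans (hrep f)
    have hstep3 : ∑ x : Fin n → Bool, f x * h x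
        = ∑ x : Fin n → Bool, (f x - g x) * h x := by
      have hv := hvanish g hg
      rw [show ∑ x : Fin n → Bool, (f x - g x) * h x
          = ∑ x : Fin n → Bool, f x * h x - ∑ x : Fin n → Bool, g x * h x from by
        rw [← Finset.sum_sub_distrib]
        exact Finset.sum_congr rfl fun x _ => by ring, hv, sub_zero]
    have hstep4 := cube_holder hq1 hqs (fun x => f x - g x) h
    have hup : ‖(Submodule.Quotient.mk (toLp pstar f) :
        (PiLp pstar fun _ : Fin n → Bool => ℝ) ⧸ tailSub n k pstar)‖
        ≤ M * cubeNorm qstar (fun x => f x - g x) * ((2:ℝ)^n) ^ (1 - 1/p) := by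
      calc ‖(Submodule.Quotient.mk (toLp pstar f) :
          (PiLp pstar fun _ : Fin n → Bool => ℝ) ⧸ tailSub n k pstar)‖
          = ∑ x : Fin n → Bool, (f x - g x) * h x := hstep2.trans hstep3
      _ ≤ ‖toLp qstar (fun x => f x - g x)‖
            * (∑ x : Fin n → Bool, |h x| ^ q) ^ (1/q) := hstep4
      _ ≤ ‖toLp qstar (fun x => f x - g x)‖
            * (M * (((2:ℝ)^n) ^ (1/q) / ((2:ℝ)^n) ^ (1/p))) :=
          mul_le_mul_of_nonneg_left hq_bound (norm_nonneg _)
      _ = M * cubeNorm qstar (fun x => f x - g x)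
            * (((2:ℝ)^n) ^ (1 - 1/q) * (((2:ℝ)^n) ^ (1/q) / ((2:ℝ)^n) ^ (1/p))) := by
          rw [hnormq (fun x => f x - g x)]
          ring
      _ = M * cubeNorm qstar (fun x => f x - g x) * ((2:ℝ)^n) ^ (1 - 1/p) := by
          rw [hpow]
    calc distFromTail k pstar f
        ≤ ‖(Submodule.Quotient.mk (toLp pstar f) :
            (PiLp pstar fun _ : Fin n → Bool => ℝ) ⧸ tailSub n k pstar)‖
          / ((2:ℝ)^n) ^ (1 - 1/p) := hD
    _ ≤ (M * cubeNorm qstar (fun x => f x - g x) * ((2:ℝ)^n) ^ (1 - 1/p))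
          / ((2:ℝ)^n) ^ (1 - 1/p) := by gcongr
    _ = M * cubeNorm qstar (fun x => f x - g x) :=
        mul_div_cancel_right₀ _ (ne_of_gt hc)
  have hTne : {t : ℝ | ∃ g : (Fin n → Bool) → ℝ,
      spectrumIn g {j | k < j} ∧ t = cubeNorm qstar (fun x => f x - g x)}.Nonempty :=
    ⟨cubeNorm qstar (fun x => f x - (fun _ => (0:ℝ)) x),
      ⟨fun _ => 0, fun S hS => walshCoeff_zero' S, rfl⟩⟩
  have hfinal : distFromTail k pstar f / M ≤ distFromTail k qstar f := by
    unfold distFromTail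
    refine le_csInf hTne ?_
    rintro t ⟨g, hg, rfl⟩
    rw [div_le_iff₀ hM, mul_comm]
    exact hkey g hg
  have := (div_le_iff₀ hM).mp hfinal
  linarith
end
end

section
/- There exists a universal constant C > 0 such that for every n ≥ 1, every r ∈ (1,∞), and every function f : {-1,1}^n → ℝ, inf_{g ∈ P_{>1}^n} ‖f − g‖_r ≤ C · ( |E f| + max_{1 ≤ i ≤ n} |f̂({i})| + sqrt((r−1)/r) · (Σ_{i=1}^n f̂({i})²)^{1/2} ), where E f denotes the mean of f on {-1,1}^n. -/
open Finset
open scoped ENNReal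

noncomputable section

namespace Stmt2Aux

variable {n : ℕ}

def sgn (b : Bool) : ℝ := if b then 1 else -1

lemma sgn_abs (b : Bool) : |sgn b| = 1 := by cases b <;> simp [sgn]

lemma sgn_sq (b : Bool) : sgn b * sgn b = 1 := by cases b <;> simp [sgn]

lemma sgn_not (b : Bool) : sgn (!b) = - sgn b := by cases b <;> simp [sgn]

lemma walsh_singleton (i : Fin n) (x : Fin n → Bool) : walsh n {i} x = sgn (x i) := by
  simp [walsh, sgn]

lemma card_cube : (Fintype.card (Fin n → Bool) : ℝ) = 2 ^ n := by
  simp [Fintype.card_fun]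

lemma sum_const_cube (c : ℝ) : ∑ _x : Fin n → Bool, c = 2 ^ n * c := by
  rw [Finset.sum_const, Finset.card_univ, nsmul_eq_mul, card_cube]

lemma sum_prod_cube (g : Fin n → Bool → ℝ) :
    ∑ x : Fin n → Bool, ∏ i, g i (x i) = ∏ i, (g i true + g i false) := by
  rw [← Fintype.prod_sum g]
  congr 1; funext i
  simp

lemma flip_invol (i : Fin n) :
    Function.Involutive (fun x : Fin n → Bool => Function.update x i (!(x i))) := by
  intro x; funext j
  rcases eq_or_ne j i with rfl | h
  · simp
  · simp [Function.update_of_ne h]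

lemma sum_flip (i : Fin n) (F : (Fin n → Bool) → ℝ) :
    ∑ x : Fin n → Bool, F (Function.update x i (!(x i))) = ∑ x : Fin n → Bool, F x :=
  Function.Bijective.sum_comp ((flip_invol i).bijective) F

lemma sum_neg_cube (F : (Fin n → Bool) → ℝ) :
    ∑ x : Fin n → Bool, F (fun j => !(x j)) = ∑ x : Fin n → Bool, F x := by
  have hinv : Function.Involutive (fun x : Fin n → Bool => (fun j => !(x j))) := by
    intro x; funext j; simp
  exact Function.Bijective.sum_comp hinv.bijective F

lemma sum_sgn (i : Fin n) : ∑ x : Fin n → Bool, sgn (x i) = 0 := by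
  have h : ∑ x : Fin n → Bool, sgn (x i) = ∑ x : Fin n → Bool, - sgn (x i) := by
    conv_lhs => rw [← sum_flip i (fun x => sgn (x i))]
    apply Finset.sum_congr rfl; intro x _
    simp [sgn_not]
  rw [Finset.sum_neg_distrib] at h
  linarith

lemma sum_sgn_mul_sgn (i j : Fin n) :
    ∑ x : Fin n → Bool, sgn (x i) * sgn (x j) = if i = j then 2 ^ n else 0 := by
  rcases eq_or_ne i j with rfl | hij
  · simp only [if_pos rfl]
    calc ∑ x : Fin n → Bool, sgn (x i) * sgn (x i) = ∑ _x : Fin n → Bool, (1:ℝ) := by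
          apply Finset.sum_congr rfl; intro x _; exact sgn_sq (x i)
      _ = 2 ^ n := by rw [sum_const_cube]; ring
  · rw [if_neg hij]
    have h : ∑ x : Fin n → Bool, sgn (x i) * sgn (x j)
        = ∑ x : Fin n → Bool, - (sgn (x i) * sgn (x j)) := by
      conv_lhs => rw [← sum_flip i (fun x => sgn (x i) * sgn (x j))]
      apply Finset.sum_congr rfl; intro x _
      simp only [Function.update_self, Function.update_of_ne (Ne.symm hij), sgn_not]
      ring
    rw [Finset.sum_neg_distrib] at h
    linarith

lemma sum_linear_sq (c : Fin n → ℝ) :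
    ∑ x : Fin n → Bool, (∑ j, c j * sgn (x j)) ^ 2 = 2 ^ n * ∑ j, (c j) ^ 2 := by
  have h1 : ∀ x : Fin n → Bool, (∑ j, c j * sgn (x j)) ^ 2
      = ∑ j, ∑ k, (c j * c k) * (sgn (x j) * sgn (x k)) := by
    intro x
    rw [sq, Finset.sum_mul_sum]
    apply Finset.sum_congr rfl; intro j _; apply Finset.sum_congr rfl; intro k _; ring
  simp only [h1]
  rw [Finset.sum_comm]
  have h2 : ∀ j : Fin n, ∑ x : Fin n → Bool, ∑ k, (c j * c k) * (sgn (x j) * sgn (x k))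
      = 2 ^ n * (c j) ^ 2 := by
    intro j
    rw [Finset.sum_comm]
    have h3 : ∀ k : Fin n, ∑ x : Fin n → Bool, (c j * c k) * (sgn (x j) * sgn (x k))
        = if j = k then 2 ^ n * (c j) ^ 2 else 0 := by
      intro k
      rw [← Finset.mul_sum, sum_sgn_mul_sgn]
      rcases eq_or_ne j k with rfl | h
      · simp; ring
      · simp [h]
    simp only [h3]
    simp
  simp only [h2]
  rw [← Finset.mul_sum]

end Stmt2Aux
namespace Stmt2Aux

variable {n : ℕ}

lemma walshCoeff_eq (h : (Fin n → Bool) → ℝ) (i : Fin n) :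
    walshCoeff h {i} = (∑ x : Fin n → Bool, h x * sgn (x i)) / 2 ^ n := by
  unfold walshCoeff
  congr 1
  apply Finset.sum_congr rfl; intro x _
  rw [walsh_singleton]

lemma walshCoeff_empty (h : (Fin n → Bool) → ℝ) :
    walshCoeff h ∅ = (∑ x : Fin n → Bool, h x) / 2 ^ n := by
  unfold walshCoeff
  congr 1
  apply Finset.sum_congr rfl; intro x _
  simp [walsh]

lemma walshCoeff_sub (f h : (Fin n → Bool) → ℝ) (S : Finset (Fin n)) :
    walshCoeff (fun x => f x - h x) S = walshCoeff f S - walshCoeff h S := by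
  unfold walshCoeff
  rw [← sub_div, ← Finset.sum_sub_distrib]
  congr 1
  apply Finset.sum_congr rfl; intro x _; ring

lemma cubeNorm_nonneg (r : ℝ≥0∞) (v : (Fin n → Bool) → ℝ) : 0 ≤ cubeNorm r v := by
  unfold cubeNorm
  split_ifs
  · exact le_trans (abs_nonneg (v (fun _ => true)))
      (Finset.le_sup' (fun x => |v x|) (Finset.mem_univ (fun _ => true)))
  · apply Real.rpow_nonneg
    apply div_nonneg _ (by positivity)
    apply Finset.sum_nonneg; intro x _; positivity

/-- Key reduction: to bound the distance from the tail space it suffices to exhibit one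
function `h` with the same mean and level-one coefficients as `f`. -/
lemma distFromTail_le (r : ℝ≥0∞) (f h : (Fin n → Bool) → ℝ)
    (h0 : walshCoeff h ∅ = walshCoeff f ∅)
    (h1 : ∀ i : Fin n, walshCoeff h {i} = walshCoeff f {i}) :
    distFromTail 1 r f ≤ cubeNorm r h := by
  unfold distFromTail
  have hmem : cubeNorm r h ∈ {t : ℝ | ∃ g : (Fin n → Bool) → ℝ,
      spectrumIn g {j | 1 < j} ∧ t = cubeNorm r (fun x => f x - g x)} := by
    refine ⟨fun x => f x - h x, ?_, ?_⟩
    · intro S hS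
      simp only [Set.mem_setOf_eq, not_lt] at hS
      rw [walshCoeff_sub]
      interval_cases h' : S.card
      · rw [Finset.card_eq_zero] at h'
        subst h'
        rw [h0, sub_self]
      · rw [Finset.card_eq_one] at h'
        obtain ⟨i, rfl⟩ := h'
        rw [h1 i, sub_self]
    · congr 1
      funext x; ring
  apply csInf_le _ hmem
  refine ⟨0, ?_⟩
  rintro t ⟨g, _, rfl⟩
  exact cubeNorm_nonneg _ _

lemma cubeNorm_ofReal (r : ℝ) (hr : 0 < r) (v : (Fin n → Bool) → ℝ) :
    cubeNorm (ENNReal.ofReal r) v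
      = ((∑ x : Fin n → Bool, |v x| ^ r) / 2 ^ n) ^ (1 / r) := by
  unfold cubeNorm
  rw [if_neg ENNReal.ofReal_ne_top, ENNReal.toReal_ofReal hr.le]

lemma cubeNorm_le_of_abs_le (r : ℝ) (hr : 1 ≤ r) (v : (Fin n → Bool) → ℝ) (K : ℝ)
    (hK : ∀ x, |v x| ≤ K) :
    cubeNorm (ENNReal.ofReal r) v ≤ K := by
  have hr0 : 0 < r := by linarith
  have hK0 : 0 ≤ K := le_trans (abs_nonneg _) (hK (fun _ => true))
  rw [cubeNorm_ofReal r hr0]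
  have hsum : (∑ x : Fin n → Bool, |v x| ^ r) ≤ 2 ^ n * K ^ r := by
    rw [← sum_const_cube (K ^ r)]
    apply Finset.sum_le_sum; intro x _
    exact Real.rpow_le_rpow (abs_nonneg _) (hK x) hr0.le
  have h2 : ((∑ x : Fin n → Bool, |v x| ^ r) / 2 ^ n) ≤ K ^ r := by
    rw [div_le_iff₀ (by positivity)]
    linarith [hsum]
  calc ((∑ x : Fin n → Bool, |v x| ^ r) / 2 ^ n) ^ (1 / r)
      ≤ (K ^ r) ^ (1 / r) := by
        apply Real.rpow_le_rpow _ h2 (by positivity)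
        apply div_nonneg _ (by positivity)
        apply Finset.sum_nonneg; intro x _; positivity
    _ = K := by
        rw [← Real.rpow_mul hK0, mul_one_div, div_self hr0.ne', Real.rpow_one]

end Stmt2Aux
namespace Stmt2Aux

variable {n : ℕ}

lemma cubeNorm_interp (r : ℝ) (h1 : 1 < r) (h2 : r < 2) (v : (Fin n → Bool) → ℝ)
    (A B : ℝ) (hA : 0 < A) (hB : 0 < B)
    (hL1 : ∑ x : Fin n → Bool, |v x| ≤ 2 ^ n * A)
    (hL2 : ∑ x : Fin n → Bool, (v x) ^ 2 ≤ 2 ^ n * B ^ 2) :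
    cubeNorm (ENNReal.ofReal r) v ≤ A ^ ((2 - r)/r) * B ^ (2*(r - 1)/r) := by
  have hr0 : 0 < r := by linarith
  have h2r : 0 < 2 - r := by linarith
  have hr1 : 0 < r - 1 := by linarith
  have hpq : Real.HolderConjugate (1/(2-r)) (1/(r-1)) := by
    constructor
    · rw [one_div, inv_inv, one_div, inv_inv, inv_one]; ring
    · exact div_pos one_pos h2r
    · exact div_pos one_pos hr1
  have hold := Real.inner_le_Lp_mul_Lq (Finset.univ : Finset (Fin n → Bool))
    (fun x => |v x| ^ (2 - r)) (fun x => |v x| ^ (2*(r-1))) hpq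
  -- simplify the three pieces of Hölder
  have e1 : ∀ x : Fin n → Bool, |v x| ^ (2 - r) * |v x| ^ (2*(r-1)) = |v x| ^ r := by
    intro x
    rw [← Real.rpow_add' (abs_nonneg _) (by norm_num; linarith)]
    norm_num
    ring_nf
  have e2 : ∀ x : Fin n → Bool, |(|v x| ^ (2 - r))| ^ (1/(2-r)) = |v x| := by
    intro x
    rw [abs_of_nonneg (Real.rpow_nonneg (abs_nonneg _) _),
      ← Real.rpow_mul (abs_nonneg _), mul_one_div, div_self h2r.ne', Real.rpow_one]
  have e3 : ∀ x : Fin n → Bool, |(|v x| ^ (2*(r-1)))| ^ (1/(r-1)) = (v x) ^ 2 := by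
    intro x
    rw [abs_of_nonneg (Real.rpow_nonneg (abs_nonneg _) _),
      ← Real.rpow_mul (abs_nonneg _)]
    rw [show 2*(r-1) * (1/(r-1)) = 2 by field_simp]
    rw [show ((2:ℝ) = ((2:ℕ):ℝ)) by norm_num, Real.rpow_natCast, sq_abs]
  simp only [e1, e2, e3] at hold
  -- hold : ∑ |v|^r ≤ (∑ |v|) ^ (1/(1/(2-r))) * (∑ v^2) ^ (1/(1/(1/(r-1))))...
  rw [one_div_one_div, one_div_one_div] at hold
  have hS1 : (0:ℝ) ≤ ∑ x : Fin n → Bool, |v x| :=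
    Finset.sum_nonneg (fun x _ => abs_nonneg _)
  have hS2 : (0:ℝ) ≤ ∑ x : Fin n → Bool, (v x) ^ 2 :=
    Finset.sum_nonneg (fun x _ => sq_nonneg _)
  have key : ∑ x : Fin n → Bool, |v x| ^ r ≤ (2^n*A) ^ (2-r) * (2^n*B^2) ^ (r-1) := by
    refine le_trans hold (mul_le_mul ?_ ?_ ?_ ?_)
    · exact Real.rpow_le_rpow hS1 hL1 h2r.le
    · exact Real.rpow_le_rpow hS2 hL2 hr1.le
    · exact Real.rpow_nonneg hS2 _
    · exact Real.rpow_nonneg (by positivity) _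
  have h2n : (0:ℝ) < 2 ^ n := by positivity
  have keyd : (∑ x : Fin n → Bool, |v x| ^ r) / 2 ^ n
      ≤ A ^ (2-r) * (B^2) ^ (r-1) := by
    rw [div_le_iff₀ h2n]
    calc ∑ x : Fin n → Bool, |v x| ^ r ≤ (2^n*A) ^ (2-r) * (2^n*B^2) ^ (r-1) := key
      _ = A ^ (2-r) * (B^2) ^ (r-1) * 2 ^ n := by
          rw [Real.mul_rpow h2n.le hA.le, Real.mul_rpow h2n.le (by positivity)]
          rw [show ((2:ℝ)^n) ^ (2-r) * A ^ (2-r) * (((2:ℝ)^n) ^ (r-1) * (B^2) ^ (r-1))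
              = (((2:ℝ)^n) ^ (2-r) * ((2:ℝ)^n) ^ (r-1)) * (A ^ (2-r) * (B^2) ^ (r-1)) by ring]
          rw [← Real.rpow_add h2n]
          norm_num
          ring
  rw [cubeNorm_ofReal r hr0]
  calc ((∑ x : Fin n → Bool, |v x| ^ r) / 2 ^ n) ^ (1/r)
      ≤ (A ^ (2-r) * (B^2) ^ (r-1)) ^ (1/r) := by
        apply Real.rpow_le_rpow _ keyd (by positivity)
        exact div_nonneg (Finset.sum_nonneg (fun x _ => Real.rpow_nonneg (abs_nonneg _) _)) h2n.le
    _ = A ^ ((2 - r)/r) * B ^ (2*(r - 1)/r) := by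
        rw [Real.mul_rpow (Real.rpow_nonneg hA.le _) (Real.rpow_nonneg (by positivity) _),
          ← Real.rpow_mul hA.le, ← Real.rpow_mul (by positivity : (0:ℝ) ≤ B^2),
          ← Real.rpow_natCast B 2, ← Real.rpow_mul hB.le]
        push_cast
        rw [show (2 - r) * (1/r) = (2-r)/r by ring,
            show (2:ℝ) * ((r - 1) * (1/r)) = 2*(r-1)/r by ring]

end Stmt2Aux
namespace Stmt2Aux

variable {n : ℕ}

/-- Riesz product. -/
def rz (c : Fin n → ℝ) (x : Fin n → Bool) : ℝ := ∏ i, (1 + c i * sgn (x i))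

lemma rz_nonneg (c : Fin n → ℝ) (hc : ∀ i, |c i| ≤ 1) (x : Fin n → Bool) : 0 ≤ rz c x := by
  apply Finset.prod_nonneg
  intro i _
  have h : |c i * sgn (x i)| ≤ 1 := by rw [abs_mul, sgn_abs, mul_one]; exact hc i
  have := abs_le.1 h
  linarith [this.1]

lemma sum_rz (c : Fin n → ℝ) : ∑ x : Fin n → Bool, rz c x = 2 ^ n := by
  unfold rz
  rw [sum_prod_cube (fun i b => 1 + c i * sgn b)]
  have : ∀ i : Fin n, (1 + c i * sgn true) + (1 + c i * sgn false) = 2 := by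
    intro i; simp [sgn]; ring
  rw [Finset.prod_congr rfl (fun i _ => this i), Finset.prod_const]
  simp

lemma sum_sgn_mul_rz (c : Fin n → ℝ) (k : Fin n) :
    ∑ x : Fin n → Bool, sgn (x k) * rz c x = 2 ^ n * c k := by
  have hpt : ∀ x : Fin n → Bool, sgn (x k) * rz c x
      = ∏ i, ((if i = k then sgn (x i) else 1) * (1 + c i * sgn (x i))) := by
    intro x
    rw [Finset.prod_mul_distrib, Finset.prod_ite_eq' Finset.univ k (fun i => sgn (x i)),
      if_pos (Finset.mem_univ k)]
    rfl
  simp only [hpt]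
  rw [sum_prod_cube (fun i b => (if i = k then sgn b else 1) * (1 + c i * sgn b))]
  have : ∀ i : Fin n, ((if i = k then sgn true else 1) * (1 + c i * sgn true)
      + (if i = k then sgn false else 1) * (1 + c i * sgn false))
      = 2 * (if i = k then c i else 1) := by
    intro i
    rcases eq_or_ne i k with rfl | h
    · simp [sgn]; ring
    · simp [sgn, h]; ring
  rw [Finset.prod_congr rfl (fun i _ => this i), Finset.prod_mul_distrib, Finset.prod_const,
    Finset.prod_ite_eq' Finset.univ k (fun i => c i), if_pos (Finset.mem_univ k)]
  simp

lemma sum_rz_sq (c : Fin n → ℝ) :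
    ∑ x : Fin n → Bool, (rz c x) ^ 2 = 2 ^ n * ∏ i, (1 + (c i) ^ 2) := by
  have hpt : ∀ x : Fin n → Bool, (rz c x) ^ 2 = ∏ i, (1 + c i * sgn (x i)) ^ 2 := by
    intro x; rw [rz, ← Finset.prod_pow]
  simp only [hpt]
  rw [sum_prod_cube (fun i b => (1 + c i * sgn b) ^ 2)]
  have : ∀ i : Fin n, ((1 + c i * sgn true) ^ 2 + (1 + c i * sgn false) ^ 2)
      = 2 * (1 + (c i) ^ 2) := by
    intro i; simp [sgn]; ring
  rw [Finset.prod_congr rfl (fun i _ => this i), Finset.prod_mul_distrib, Finset.prod_const]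
  simp

lemma rz_mul_rz_neg (c : Fin n → ℝ) (x : Fin n → Bool) :
    rz c x * rz (fun i => -(c i)) x = ∏ i, (1 - (c i) ^ 2) := by
  unfold rz
  rw [← Finset.prod_mul_distrib]
  apply Finset.prod_congr rfl
  intro i _
  cases h : x i <;> simp [sgn] <;> ring

lemma prod_one_add_sq_le (c : Fin n → ℝ) :
    ∏ i, (1 + (c i) ^ 2) ≤ Real.exp (∑ i, (c i) ^ 2) := by
  rw [Real.exp_sum]
  apply Finset.prod_le_prod
  · intro i _; positivity
  · intro i _
    have := Real.add_one_le_exp ((c i) ^ 2)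
    linarith

end Stmt2Aux
namespace Stmt2Aux

variable {n : ℕ}

set_option maxHeartbeats 1000000 in
lemma riesz_main (r : ℝ) (h1 : 1 < r) (h2 : r < 2) (f : (Fin n → Bool) → ℝ) (M : ℝ)
    (hM : 0 < M) (hMa : ∀ i, |walshCoeff f {i}| ≤ M) :
    distFromTail 1 (ENNReal.ofReal r) f ≤
      Real.exp (1/2) * (|cubeMean f| + M
        + Real.sqrt 2 * (Real.sqrt ((r-1)/r) * Real.sqrt (∑ i, (walshCoeff f {i})^2))) := by
  have hr0 : (0:ℝ) < r := by linarith
  set a : Fin n → ℝ := fun i => walshCoeff f {i} with ha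
  set a0 : ℝ := cubeMean f with ha0
  set t : ℝ := (r-1)/r with htdef
  have ht : 0 < t := div_pos (by linarith) (by linarith)
  set s2 : ℝ := ∑ i, (a i)^2 with hs2def
  have hs2 : 0 ≤ s2 := Finset.sum_nonneg (fun i _ => sq_nonneg _)
  set lam : ℝ := max M (Real.sqrt (2*t*s2)) with hlamdef
  have hlam : 0 < lam := lt_max_iff.2 (Or.inl hM)
  have hlam2 : 2*t*s2 ≤ lam^2 := by
    have h := le_max_right M (Real.sqrt (2*t*s2))
    nlinarith [Real.sq_sqrt (show (0:ℝ) ≤ 2*t*s2 by positivity), Real.sqrt_nonneg (2*t*s2)]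
  set c : Fin n → ℝ := fun i => a i / lam with hcdef
  have hc : ∀ i, |c i| ≤ 1 := by
    intro i
    rw [hcdef]
    simp only
    rw [abs_div, abs_of_pos hlam, div_le_one hlam]
    exact le_trans (hMa i) (le_max_left _ _)
  have hcs : ∑ i, (c i)^2 = s2 / lam^2 := by
    rw [hs2def, Finset.sum_div]
    apply Finset.sum_congr rfl
    intro i _
    rw [hcdef]
    simp only
    rw [div_pow]
  set c' : Fin n → ℝ := fun i => -(c i) with hc'def
  set w : (Fin n → Bool) → ℝ := fun x => (lam/2) * (rz c x - rz c' x) with hwdef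
  set v : (Fin n → Bool) → ℝ := fun x => a0 + w x with hvdef
  -- basic sums
  have hsum_w : ∑ x : Fin n → Bool, w x = 0 := by
    rw [hwdef]
    simp only
    rw [← Finset.mul_sum, Finset.sum_sub_distrib, sum_rz, sum_rz]
    ring
  have hsum_w_sgn : ∀ i, ∑ x : Fin n → Bool, w x * sgn (x i) = 2^n * a i := by
    intro i
    have : ∀ x : Fin n → Bool, w x * sgn (x i)
        = (lam/2) * (sgn (x i) * rz c x - sgn (x i) * rz c' x) := by
      intro x; rw [hwdef]; ring
    rw [Finset.sum_congr rfl (fun x _ => this x), ← Finset.mul_sum,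
      Finset.sum_sub_distrib, sum_sgn_mul_rz, sum_sgn_mul_rz]
    have hc'i : c' i = -(c i) := rfl
    have hci : c i = a i / lam := rfl
    rw [hc'i, hci]
    field_simp
    ring
  -- coefficients of v
  have hsv : ∑ x : Fin n → Bool, v x = 2^n * a0 := by
    rw [hvdef]
    simp only
    rw [Finset.sum_add_distrib, sum_const_cube, hsum_w]
    ring
  have hv0 : walshCoeff v ∅ = walshCoeff f ∅ := by
    rw [walshCoeff_empty, walshCoeff_empty, hsv, ha0,
      show cubeMean f = (∑ x : Fin n → Bool, f x) / 2^n from rfl]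
    have h2n : ((2:ℝ)^n) ≠ 0 := by positivity
    field_simp
  have hv1 : ∀ i, walshCoeff v {i} = walshCoeff f {i} := by
    intro i
    rw [walshCoeff_eq]
    have : ∑ x : Fin n → Bool, v x * sgn (x i) = 2^n * a i := by
      have hpt : ∀ x : Fin n → Bool, v x * sgn (x i)
          = a0 * sgn (x i) + w x * sgn (x i) := by
        intro x; rw [hvdef]; ring
      rw [Finset.sum_congr rfl (fun x _ => hpt x), Finset.sum_add_distrib,
        ← Finset.mul_sum, sum_sgn, hsum_w_sgn]
      ring
    rw [this]
    have h2n : ((2:ℝ)^n) ≠ 0 := by positivity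
    rw [ha]
    field_simp
  -- L1 bound
  have hL1 : ∑ x : Fin n → Bool, |v x| ≤ 2^n * (|a0| + lam) := by
    have hpt : ∀ x : Fin n → Bool, |v x| ≤ |a0| + (lam/2) * (rz c x + rz c' x) := by
      intro x
      have h1' := rz_nonneg c hc x
      have h2' := rz_nonneg c' (fun i => by rw [hc'def]; simpa using hc i) x
      have : |w x| ≤ (lam/2) * (rz c x + rz c' x) := by
        rw [hwdef]
        simp only
        rw [abs_mul, abs_of_pos (by positivity : (0:ℝ) < lam/2)]
        have : |rz c x - rz c' x| ≤ rz c x + rz c' x :=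
          abs_le.2 ⟨by linarith, by linarith⟩
        nlinarith [this]
      calc |v x| ≤ |a0| + |w x| := by rw [hvdef]; exact abs_add_le _ _
        _ ≤ |a0| + (lam/2) * (rz c x + rz c' x) := by linarith
    calc ∑ x : Fin n → Bool, |v x|
        ≤ ∑ x : Fin n → Bool, (|a0| + (lam/2) * (rz c x + rz c' x)) :=
          Finset.sum_le_sum (fun x _ => hpt x)
      _ = 2^n * (|a0| + lam) := by
          rw [Finset.sum_add_distrib, sum_const_cube, ← Finset.mul_sum,
            Finset.sum_add_distrib, sum_rz, sum_rz]
          ring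
  -- L2 bound
  set E : ℝ := Real.exp (1/(4*t)) with hEdef
  have hE1 : 1 ≤ E := Real.one_le_exp (by positivity)
  have hL2 : ∑ x : Fin n → Bool, (v x)^2 ≤ 2^n * (|a0| + lam * E)^2 := by
    have hw2 : ∑ x : Fin n → Bool, (w x)^2 ≤ 2^n * (lam^2/2) * Real.exp (1/(2*t)) := by
      have hpt : ∀ x : Fin n → Bool, (w x)^2
          = (lam/2)^2 * ((rz c x)^2 + (rz c' x)^2 - 2 * (rz c x * rz c' x)) := by
        intro x; rw [hwdef]; ring
      rw [Finset.sum_congr rfl (fun x _ => hpt x), ← Finset.mul_sum]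
      have e1 : ∑ x : Fin n → Bool, ((rz c x)^2 + (rz c' x)^2 - 2 * (rz c x * rz c' x))
          = (∑ x : Fin n → Bool, (rz c x)^2) + (∑ x : Fin n → Bool, (rz c' x)^2)
            - 2 * ∑ x : Fin n → Bool, rz c x * rz c' x := by
        rw [Finset.sum_sub_distrib, Finset.sum_add_distrib, Finset.mul_sum]
      have e2 : ∑ x : Fin n → Bool, (rz c' x)^2 = 2^n * ∏ i, (1 + (c i)^2) := by
        rw [sum_rz_sq]
        congr 1
        apply Finset.prod_congr rfl
        intro i _
        rw [hc'def]
        simp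
      have e3 : 0 ≤ ∑ x : Fin n → Bool, rz c x * rz c' x := by
        apply Finset.sum_nonneg
        intro x _
        rw [hc'def, rz_mul_rz_neg]
        apply Finset.prod_nonneg
        intro i _
        have := abs_le.1 (hc i)
        nlinarith
      have e4 : ∏ i, (1 + (c i)^2) ≤ Real.exp (1/(2*t)) := by
        refine le_trans (prod_one_add_sq_le c) ?_
        apply Real.exp_le_exp.2
        rw [hcs]
        rw [div_le_div_iff₀ (by positivity) (by positivity)]
        nlinarith [hlam2]
      have hPn : (0:ℝ) ≤ ∏ i, (1 + (c i)^2) :=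
        Finset.prod_nonneg (fun i _ => by positivity)
      have key := mul_le_mul_of_nonneg_left e4
        (by positivity : (0:ℝ) ≤ 2^n * (lam^2/2))
      have hsg : 0 ≤ lam^2/2 * (∑ x : Fin n → Bool, rz c x * rz c' x) :=
        mul_nonneg (by positivity) e3
      rw [e1, sum_rz_sq, e2]
      linarith [key, hsg]
    have hvpt : ∑ x : Fin n → Bool, (v x)^2
        = 2^n * a0^2 + ∑ x : Fin n → Bool, (w x)^2 := by
      have hpt : ∀ x : Fin n → Bool, (v x)^2 = a0^2 + 2*a0*(w x) + (w x)^2 := by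
        intro x; rw [hvdef]; ring
      rw [Finset.sum_congr rfl (fun x _ => hpt x), Finset.sum_add_distrib,
        Finset.sum_add_distrib, sum_const_cube, ← Finset.mul_sum, hsum_w]
      ring
    have hEsq : E^2 = Real.exp (1/(2*t)) := by
      have hq : (1:ℝ)/(4*t) + 1/(4*t) = 1/(2*t) := by
        rw [← add_div, div_eq_div_iff (by positivity) (by positivity)]
        ring
      rw [hEdef, sq, ← Real.exp_add, hq]
    rw [hvpt]
    have h2n : (0:ℝ) < 2^n := by positivity
    have hq2 : lam^2/2 * E^2 ≤ 2 * |a0| * (lam * E) + (lam*E)^2 := by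
      nlinarith [sq_nonneg (lam*E),
        mul_nonneg (abs_nonneg a0) (mul_nonneg hlam.le (le_trans zero_le_one hE1))]
    have hstep := mul_le_mul_of_nonneg_left hq2 h2n.le
    have hw2' : ∑ x : Fin n → Bool, (w x)^2 ≤ 2^n * (lam^2/2 * E^2) := by
      rw [hEsq]
      linarith [hw2]
    have hexpand : (|a0| + lam*E)^2 = a0^2 + (2 * |a0| * (lam * E) + (lam*E)^2) := by
      rw [← sq_abs a0]
      ring
    rw [hexpand, mul_add]
    linarith [hw2', hstep]
  -- interpolation
  have hA : (0:ℝ) < |a0| + lam := by positivity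
  have hB : (0:ℝ) < |a0| + lam * E := by positivity
  have hinterp := cubeNorm_interp r h1 h2 v (|a0| + lam) (|a0| + lam * E) hA hB hL1 hL2
  have hfinal : (|a0| + lam) ^ ((2-r)/r) * (|a0| + lam * E) ^ (2*(r-1)/r)
      ≤ Real.exp (1/2) * (|a0| + lam) := by
    have hBle : |a0| + lam * E ≤ E * (|a0| + lam) := by nlinarith [abs_nonneg a0]
    calc (|a0| + lam) ^ ((2-r)/r) * (|a0| + lam * E) ^ (2*(r-1)/r)
        ≤ (|a0| + lam) ^ ((2-r)/r) * (E * (|a0| + lam)) ^ (2*(r-1)/r) := by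
          apply mul_le_mul_of_nonneg_left _ (Real.rpow_nonneg hA.le _)
          exact Real.rpow_le_rpow hB.le hBle (by apply div_nonneg <;> linarith)
      _ = E ^ (2*(r-1)/r) * ((|a0| + lam) ^ ((2-r)/r) * (|a0| + lam) ^ (2*(r-1)/r)) := by
          rw [Real.mul_rpow (le_trans zero_le_one hE1) hA.le]
          ring
      _ = Real.exp (1/2) * (|a0| + lam) := by
          rw [← Real.rpow_add hA]
          rw [show (2-r)/r + 2*(r-1)/r = 1 by field_simp; ring, Real.rpow_one]
          have hexpo : 1/(4*t) * (2*(r-1)/r) = 1/2 := by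
            rw [show 2*(r-1)/r = 2*t by rw [htdef]; ring, one_div, inv_mul_eq_div,
              mul_comm (2:ℝ) t, mul_comm (4:ℝ) t, mul_div_mul_left _ _ ht.ne']
            norm_num
          rw [hEdef, ← Real.exp_mul, hexpo]
  have hdist := distFromTail_le (ENNReal.ofReal r) f v hv0 hv1
  have hlamle : lam ≤ M + Real.sqrt 2 * (Real.sqrt t * Real.sqrt s2) := by
    rw [hlamdef]
    apply max_le
    · have := mul_nonneg (Real.sqrt_nonneg (2:ℝ))
        (mul_nonneg (Real.sqrt_nonneg t) (Real.sqrt_nonneg s2))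
      linarith
    · rw [show 2*t*s2 = 2*(t*s2) by ring, Real.sqrt_mul (by norm_num : (0:ℝ) ≤ 2),
        Real.sqrt_mul ht.le]
      linarith [hM]
  calc distFromTail 1 (ENNReal.ofReal r) f ≤ cubeNorm (ENNReal.ofReal r) v := hdist
    _ ≤ (|a0| + lam) ^ ((2-r)/r) * (|a0| + lam * E) ^ (2*(r-1)/r) := hinterp
    _ ≤ Real.exp (1/2) * (|a0| + lam) := hfinal
    _ ≤ Real.exp (1/2) * (|a0| + M
        + Real.sqrt 2 * (Real.sqrt t * Real.sqrt s2)) := by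
          have := Real.exp_pos (1/(2:ℝ))
          nlinarith [hlamle]

end Stmt2Aux
namespace Stmt2Aux

variable {n : ℕ}

def clamp (l y : ℝ) : ℝ := max (-l) (min l y)

lemma clamp_mono (l : ℝ) : Monotone (clamp l) :=
  fun _ _ h => max_le_max le_rfl (min_le_min le_rfl h)

lemma clamp_lip (l y z : ℝ) (h : z ≤ y) : clamp l y - clamp l z ≤ y - z := by
  unfold clamp
  simp only [max_def, min_def]
  split_ifs <;> linarith

lemma clamp_eq (l y : ℝ) (h : |y| ≤ l) : clamp l y = y := by
  have h' := abs_le.1 h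
  unfold clamp
  rw [min_eq_right h'.2, max_eq_right h'.1]

lemma clamp_abs_le (l y : ℝ) (hl : 0 ≤ l) : |clamp l y| ≤ l := by
  apply abs_le.2
  constructor
  · exact le_max_left _ _
  · exact max_le (by linarith) (min_le_left _ _)

lemma clamp_neg (l y : ℝ) (hl : 0 ≤ l) : clamp l (-y) = - clamp l y := by
  unfold clamp
  simp only [max_def, min_def]
  split_ifs <;> linarith

lemma clamp_pt (l biv yv u : ℝ) (hu : u = 1 ∨ u = -1) :
    |biv - u * (clamp l yv - clamp l (yv - 2 * biv * u)) / 2| ≤ |biv| := by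
  have mono := clamp_mono l
  rcases hu with rfl | rfl
  · rcases le_total 0 biv with hb | hb
    · have h1 : clamp l (yv - 2*biv*1) ≤ clamp l yv := mono (by linarith)
      have h2 : clamp l yv - clamp l (yv - 2*biv*1) ≤ yv - (yv - 2*biv*1) :=
        clamp_lip _ _ _ (by linarith)
      rw [abs_of_nonneg hb]
      exact abs_le.2 ⟨by linarith, by linarith⟩
    · have h1 : clamp l yv ≤ clamp l (yv - 2*biv*1) := mono (by nlinarith)
      have h2 : clamp l (yv - 2*biv*1) - clamp l yv ≤ (yv - 2*biv*1) - yv :=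
        clamp_lip _ _ _ (by nlinarith)
      rw [abs_of_nonpos hb]
      exact abs_le.2 ⟨by linarith, by linarith⟩
  · rcases le_total 0 biv with hb | hb
    · have h1 : clamp l yv ≤ clamp l (yv - 2*biv*(-1)) := mono (by nlinarith)
      have h2 : clamp l (yv - 2*biv*(-1)) - clamp l yv ≤ (yv - 2*biv*(-1)) - yv :=
        clamp_lip _ _ _ (by nlinarith)
      rw [abs_of_nonneg hb]
      exact abs_le.2 ⟨by linarith, by linarith⟩
    · have h1 : clamp l (yv - 2*biv*(-1)) ≤ clamp l yv := mono (by nlinarith)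
      have h2 : clamp l yv - clamp l (yv - 2*biv*(-1)) ≤ yv - (yv - 2*biv*(-1)) :=
        clamp_lip _ _ _ (by nlinarith)
      rw [abs_of_nonpos hb]
      exact abs_le.2 ⟨by linarith, by linarith⟩

def lin (b : Fin n → ℝ) (x : Fin n → Bool) : ℝ := ∑ j, b j * sgn (x j)

lemma sum_lin_sq (b : Fin n → ℝ) :
    ∑ x : Fin n → Bool, (lin b x)^2 = 2^n * ∑ j, (b j)^2 := by
  unfold lin
  exact sum_linear_sq b

lemma lin_abs_le (b : Fin n → ℝ) (x : Fin n → Bool) : |lin b x| ≤ ∑ j, |b j| := by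
  unfold lin
  refine le_trans (Finset.abs_sum_le_sum_abs _ _) ?_
  apply Finset.sum_le_sum
  intro j _
  rw [abs_mul, sgn_abs, mul_one]

lemma sum_lin (b : Fin n → ℝ) : ∑ x : Fin n → Bool, lin b x = 0 := by
  unfold lin
  rw [Finset.sum_comm]
  apply Finset.sum_eq_zero
  intro j _
  rw [← Finset.mul_sum, sum_sgn, mul_zero]

lemma walshCoeff_lin (b : Fin n → ℝ) (i : Fin n) : walshCoeff (lin b) {i} = b i := by
  rw [walshCoeff_eq]
  have : ∑ x : Fin n → Bool, lin b x * sgn (x i)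
      = ∑ x : Fin n → Bool, ∑ j, (b j) * (sgn (x j) * sgn (x i)) := by
    apply Finset.sum_congr rfl
    intro x _
    unfold lin
    rw [Finset.sum_mul]
    apply Finset.sum_congr rfl
    intro j _
    ring
  rw [this, Finset.sum_comm]
  have h2 : ∀ j : Fin n, ∑ x : Fin n → Bool, (b j) * (sgn (x j) * sgn (x i))
      = if j = i then 2^n * b j else 0 := by
    intro j
    rw [← Finset.mul_sum, sum_sgn_mul_sgn]
    split_ifs with h
    · ring
    · ring
  rw [Finset.sum_congr rfl (fun j _ => h2 j), Finset.sum_ite_eq' Finset.univ i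
    (fun j => 2^n * b j), if_pos (Finset.mem_univ i)]
  field_simp

lemma sum_clamp_lin (l : ℝ) (hl : 0 ≤ l) (b : Fin n → ℝ) :
    ∑ x : Fin n → Bool, clamp l (lin b x) = 0 := by
  have h : ∑ x : Fin n → Bool, clamp l (lin b x)
      = ∑ x : Fin n → Bool, - clamp l (lin b x) := by
    conv_lhs => rw [← sum_neg_cube (fun x => clamp l (lin b x))]
    apply Finset.sum_congr rfl
    intro x _
    have : lin b (fun j => !(x j)) = - lin b x := by
      unfold lin
      rw [← Finset.sum_neg_distrib]
      apply Finset.sum_congr rfl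
      intro j _
      rw [sgn_not]
      ring
    rw [this, clamp_neg _ _ hl]
  rw [Finset.sum_neg_distrib] at h
  linarith

lemma lin_flip (b : Fin n → ℝ) (i : Fin n) (x : Fin n → Bool) :
    lin b (Function.update x i (!(x i))) = lin b x - 2 * b i * sgn (x i) := by
  unfold lin
  have h : ∀ j : Fin n, b j * sgn (Function.update x i (!(x i)) j)
      = (fun j => b j * sgn (x j)) j + (if j = i then -2 * b i * sgn (x i) else 0) := by
    intro j
    rcases eq_or_ne j i with rfl | h
    · rw [if_pos rfl, Function.update_self, sgn_not]
      ring
    · rw [if_neg h, Function.update_of_ne h]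
      ring
  rw [Finset.sum_congr rfl (fun j _ => h j), Finset.sum_add_distrib,
    Finset.sum_ite_eq' Finset.univ i (fun _ => -2 * b i * sgn (x i)),
    if_pos (Finset.mem_univ i)]
  ring

lemma lin_update (b : Fin n → ℝ) (i : Fin n) (x : Fin n → Bool) :
    lin (Function.update b i 0) x = lin b x - b i * sgn (x i) := by
  unfold lin
  have h : ∀ j : Fin n, Function.update b i 0 j * sgn (x j)
      = b j * sgn (x j) + (if j = i then - b i * sgn (x i) else 0) := by
    intro j
    rcases eq_or_ne j i with rfl | h
    · rw [if_pos rfl, Function.update_self]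
      ring
    · rw [if_neg h, Function.update_of_ne h]
      ring
  rw [Finset.sum_congr rfl (fun j _ => h j), Finset.sum_add_distrib,
    Finset.sum_ite_eq' Finset.univ i (fun _ => - b i * sgn (x i)),
    if_pos (Finset.mem_univ i)]
  ring

lemma sum_update_sq (b : Fin n → ℝ) (i : Fin n) :
    ∑ j, (Function.update b i 0 j)^2 = (∑ j, (b j)^2) - (b i)^2 := by
  have h : ∀ j : Fin n, (Function.update b i 0 j)^2
      = (b j)^2 + (if j = i then - (b i)^2 else 0) := by
    intro j
    rcases eq_or_ne j i with rfl | h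
    · rw [if_pos rfl, Function.update_self]
      ring
    · rw [if_neg h, Function.update_of_ne h]
      ring
  rw [Finset.sum_congr rfl (fun j _ => h j), Finset.sum_add_distrib,
    Finset.sum_ite_eq' Finset.univ i (fun _ => - (b i)^2), if_pos (Finset.mem_univ i)]
  ring

end Stmt2Aux
namespace Stmt2Aux

variable {n : ℕ}

set_option maxHeartbeats 1000000 in
lemma step_bound (b : Fin n → ℝ) (i : Fin n) :
    |b i - walshCoeff (fun x => clamp (3 * Real.sqrt (∑ j, (b j)^2)) (lin b x)) {i}|
      ≤ |b i| / 4 := by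
  set s2 : ℝ := ∑ j, (b j)^2 with hs2
  have hs2n : 0 ≤ s2 := Finset.sum_nonneg fun j _ => sq_nonneg _
  rcases eq_or_lt_of_le hs2n with h0 | hpos
  · -- degenerate case : all coefficients vanish
    have hb : ∀ j, b j = 0 := by
      intro j
      have h := (Finset.sum_eq_zero_iff_of_nonneg
        (fun j _ => sq_nonneg (b j))).1 h0.symm j (Finset.mem_univ j)
      exact pow_eq_zero_iff (two_ne_zero) |>.1 h
    have hlin : ∀ x : Fin n → Bool, lin b x = 0 := by
      intro x; unfold lin; simp [hb]
    have hz : walshCoeff (fun x => clamp (3 * Real.sqrt s2) (lin b x)) {i} = 0 := by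
      rw [walshCoeff_eq]
      have : ∀ x : Fin n → Bool, clamp (3 * Real.sqrt s2) (lin b x) * sgn (x i) = 0 := by
        intro x
        rw [hlin x, ← h0]
        simp [clamp]
      rw [Finset.sum_congr rfl (fun x _ => this x)]
      simp
    rw [hz, hb i]
    simp
  · -- main case
    set σ : ℝ := Real.sqrt s2 with hσdef
    have hσpos : 0 < σ := Real.sqrt_pos.2 hpos
    have hσsq : σ^2 = s2 := Real.sq_sqrt hs2n
    have hbσ : ∀ j, |b j| ≤ σ := by
      intro j
      rw [← Real.sqrt_sq_eq_abs, hσdef]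
      apply Real.sqrt_le_sqrt
      exact Finset.single_le_sum (fun j _ => sq_nonneg (b j)) (Finset.mem_univ j)
    set l : ℝ := 3 * σ with hldef
    set D : (Fin n → Bool) → ℝ :=
      fun x => sgn (x i) * (clamp l (lin b x) - clamp l (lin b x - 2 * b i * sgn (x i))) / 2
      with hD
    -- the coefficient is the average of D
    have hcoeff : walshCoeff (fun x => clamp l (lin b x)) {i}
        = (∑ x : Fin n → Bool, D x) / 2^n := by
      rw [walshCoeff_eq]
      congr 1
      have hkey : ∀ x : Fin n → Bool,
          clamp l (lin b x) * sgn (x i)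
          + clamp l (lin b (Function.update x i (!(x i))))
              * sgn ((Function.update x i (!(x i))) i)
          = 2 * D x := by
        intro x
        rw [lin_flip, Function.update_self, sgn_not, hD]
        ring
      have hpair : ∑ x : Fin n → Bool, clamp l (lin b x) * sgn (x i)
          = (∑ x : Fin n → Bool, (clamp l (lin b x) * sgn (x i)
            + clamp l (lin b (Function.update x i (!(x i))))
              * sgn ((Function.update x i (!(x i))) i)))/2 := by
        rw [Finset.sum_add_distrib,
          sum_flip i (fun x => clamp l (lin b x) * sgn (x i))]
        ring
      rw [hpair, Finset.sum_congr rfl (fun x _ => hkey x), ← Finset.mul_sum]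
      ring
    -- pointwise bounds
    have hpt : ∀ x : Fin n → Bool, |b i - D x| ≤ |b i| := by
      intro x
      rw [hD]
      exact clamp_pt l (b i) (lin b x) (sgn (x i))
        (by cases h : x i
            · right; simp [sgn, h]
            · left; simp [sgn, h])
    set Y : (Fin n → Bool) → ℝ := fun x => lin b x - b i * sgn (x i) with hY
    have hgood : ∀ x : Fin n → Bool, |Y x| ≤ 2*σ → D x = b i := by
      intro x hx
      have hu : sgn (x i) * sgn (x i) = 1 := sgn_sq (x i)
      have habs : |sgn (x i)| = 1 := sgn_abs (x i)
      have hbi := hbσ i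
      have hY' : lin b x = Y x + b i * sgn (x i) := by rw [hY]; ring
      have h1 : |lin b x| ≤ l := by
        rw [hY']
        refine le_trans (abs_add_le _ _) ?_
        rw [abs_mul, habs, mul_one, hldef]
        linarith
      have h2 : |lin b x - 2 * b i * sgn (x i)| ≤ l := by
        have : lin b x - 2 * b i * sgn (x i) = Y x + (- b i) * sgn (x i) := by
          rw [hY']; ring
        rw [this]
        refine le_trans (abs_add_le _ _) ?_
        rw [abs_mul, habs, mul_one, abs_neg, hldef]
        linarith
      rw [hD]
      simp only
      rw [clamp_eq _ _ h1, clamp_eq _ _ h2]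
      linear_combination (b i) * hu
    -- Chebyshev bound on the bad set
    have hYsum : ∑ x : Fin n → Bool, (Y x)^2 ≤ 2^n * s2 := by
      have hYlin : ∀ x : Fin n → Bool, Y x = lin (Function.update b i 0) x := by
        intro x
        rw [hY, lin_update]
      rw [Finset.sum_congr rfl (fun x _ => by rw [hYlin x]), sum_lin_sq, sum_update_sq]
      have h2n : (0:ℝ) ≤ 2^n := by positivity
      nlinarith [sq_nonneg (b i)]
    set bad : Finset (Fin n → Bool) :=
      Finset.univ.filter (fun x : Fin n → Bool => 2*σ < |Y x|) with hbad
    have hcard : (bad.card : ℝ) * (4 * s2) ≤ 2^n * s2 := by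
      calc (bad.card : ℝ) * (4*s2) ≤ ∑ x ∈ bad, (Y x)^2 := by
            rw [← nsmul_eq_mul]
            apply Finset.card_nsmul_le_sum
            intro x hx
            rw [hbad, Finset.mem_filter] at hx
            have h1 : 2*σ < |Y x| := hx.2
            nlinarith [sq_abs (Y x), hσsq, hσpos]
        _ ≤ ∑ x : Fin n → Bool, (Y x)^2 :=
            Finset.sum_le_sum_of_subset_of_nonneg (Finset.filter_subset _ _)
              (fun x _ _ => sq_nonneg _)
        _ ≤ 2^n * s2 := hYsum
    have hcard4 : (bad.card : ℝ) * 4 ≤ 2^n := by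
      have := le_of_mul_le_mul_right (by linarith [hcard] :
        ((bad.card : ℝ) * 4) * s2 ≤ (2^n) * s2) hpos
      exact this
    -- combine
    have hsplit : ∑ x : Fin n → Bool, |b i - D x| ≤ (bad.card : ℝ) * |b i| := by
      rw [← Finset.sum_filter_add_sum_filter_not Finset.univ
        (fun x : Fin n → Bool => 2*σ < |Y x|) (fun x => |b i - D x|)]
      have hgood0 : ∑ x ∈ Finset.univ.filter
          (fun x : Fin n → Bool => ¬(2*σ < |Y x|)), |b i - D x| = 0 := by
        apply Finset.sum_eq_zero
        intro x hx
        rw [Finset.mem_filter] at hx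
        rw [hgood x (le_of_not_gt hx.2)]
        simp
      rw [hgood0, add_zero]
      calc ∑ x ∈ bad, |b i - D x| ≤ ∑ x ∈ bad, |b i| :=
            Finset.sum_le_sum (fun x _ => hpt x)
        _ = (bad.card : ℝ) * |b i| := by rw [Finset.sum_const, nsmul_eq_mul]
    have h2npos : (0:ℝ) < 2^n := by positivity
    have hfin : b i - walshCoeff (fun x => clamp l (lin b x)) {i}
        = (∑ x : Fin n → Bool, (b i - D x))/2^n := by
      rw [hcoeff, Finset.sum_sub_distrib, sum_const_cube, sub_div]
      congr 1
      field_simp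
    rw [hfin, abs_div, abs_of_pos h2npos, div_le_div_iff₀ h2npos (by norm_num : (0:ℝ) < 4)]
    calc |∑ x : Fin n → Bool, (b i - D x)| * 4
        ≤ (∑ x : Fin n → Bool, |b i - D x|) * 4 := by
          have := Finset.abs_sum_le_sum_abs (fun x : Fin n → Bool => b i - D x) Finset.univ
          linarith
      _ ≤ ((bad.card : ℝ) * |b i|) * 4 := by linarith [hsplit]
      _ = ((bad.card : ℝ) * 4) * |b i| := by ring
      _ ≤ 2^n * |b i| := by
          have := abs_nonneg (b i)
          nlinarith [hcard4]
      _ = |b i| * 2^n := by ring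

end Stmt2Aux
namespace Stmt2Aux

variable {n : ℕ}

def aSeq (a : Fin n → ℝ) : ℕ → (Fin n → ℝ)
  | 0 => a
  | (m+1) => fun i => aSeq a m i -
      walshCoeff (fun x => clamp (3 * Real.sqrt (∑ j, (aSeq a m j)^2))
        (lin (aSeq a m) x)) {i}

lemma aSeq_decay (a : Fin n → ℝ) (m : ℕ) (i : Fin n) :
    |aSeq a (m+1) i| ≤ |aSeq a m i| / 4 :=
  step_bound (aSeq a m) i

lemma aSeq_le (a : Fin n → ℝ) (m : ℕ) (i : Fin n) :
    |aSeq a m i| ≤ |a i| * (1/4)^m := by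
  induction m with
  | zero => simp [aSeq]
  | succ m ih =>
      refine le_trans (aSeq_decay a m i) ?_
      rw [pow_succ]
      linarith

lemma aSeq_sqrt_le (a : Fin n → ℝ) (m : ℕ) :
    Real.sqrt (∑ j, (aSeq a m j)^2) ≤ Real.sqrt (∑ j, (a j)^2) * (1/4)^m := by
  set σ := Real.sqrt (∑ j, (a j)^2) with hσ
  have hσn : 0 ≤ σ := Real.sqrt_nonneg _
  have hσsq : σ^2 = ∑ j, (a j)^2 :=
    Real.sq_sqrt (Finset.sum_nonneg fun j _ => sq_nonneg _)
  have hsum : ∑ j, (aSeq a m j)^2 ≤ (σ * (1/4)^m)^2 := by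
    have hpt : ∀ j : Fin n, (aSeq a m j)^2 ≤ (a j)^2 * ((1/4)^m)^2 := by
      intro j
      have h := aSeq_le a m j
      have h2 : (0:ℝ) ≤ |a j| * (1/4)^m := by positivity
      calc (aSeq a m j)^2 = |aSeq a m j|^2 := (sq_abs _).symm
        _ ≤ (|a j| * (1/4)^m)^2 := by nlinarith [abs_nonneg (aSeq a m j)]
        _ = (a j)^2 * ((1/4)^m)^2 := by rw [mul_pow, sq_abs]
    calc ∑ j, (aSeq a m j)^2 ≤ ∑ j, (a j)^2 * ((1/4)^m)^2 :=
          Finset.sum_le_sum (fun j _ => hpt j)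
      _ = (σ * (1/4)^m)^2 := by rw [← Finset.sum_mul, ← hσsq]; ring
  calc Real.sqrt (∑ j, (aSeq a m j)^2) ≤ Real.sqrt ((σ * (1/4)^m)^2) :=
        Real.sqrt_le_sqrt hsum
    _ = σ * (1/4)^m := Real.sqrt_sq (by positivity)

lemma walshCoeff_sum_fun {ι : Type*} (s : Finset ι) (F : ι → (Fin n → Bool) → ℝ)
    (S : Finset (Fin n)) :
    walshCoeff (fun x => ∑ m ∈ s, F m x) S = ∑ m ∈ s, walshCoeff (F m) S := by
  unfold walshCoeff
  rw [← Finset.sum_div]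
  congr 1
  rw [Finset.sum_comm]
  apply Finset.sum_congr rfl
  intro x _
  rw [Finset.sum_mul]

lemma walshCoeff_add (g h : (Fin n → Bool) → ℝ) (S : Finset (Fin n)) :
    walshCoeff (fun x => g x + h x) S = walshCoeff g S + walshCoeff h S := by
  unfold walshCoeff
  rw [← add_div]
  congr 1
  rw [← Finset.sum_add_distrib]
  apply Finset.sum_congr rfl
  intro x _
  ring

lemma walshCoeff_const (c : ℝ) (i : Fin n) :
    walshCoeff (fun _ => c) {i} = 0 := by
  rw [walshCoeff_eq, ← Finset.mul_sum, sum_sgn, mul_zero, zero_div]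

lemma geom_quarter (N : ℕ) : ∑ m ∈ Finset.range N, ((1:ℝ)/4)^m ≤ 4/3 := by
  rw [geom_sum_eq (by norm_num : (1:ℝ)/4 ≠ 1)]
  rw [div_le_iff_of_neg (by norm_num : (1:ℝ)/4 - 1 < 0)]
  have := pow_nonneg (by norm_num : (0:ℝ) ≤ 1/4) N
  linarith

set_option maxHeartbeats 1000000 in
lemma clamp_main (f : (Fin n → Bool) → ℝ) (r : ℝ) (hr : 1 ≤ r) :
    distFromTail 1 (ENNReal.ofReal r) f ≤
      |cubeMean f| + 5 * Real.sqrt (∑ i, (walshCoeff f {i})^2) := by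
  set a : Fin n → ℝ := fun i => walshCoeff f {i} with ha
  set σ : ℝ := Real.sqrt (∑ i, (a i)^2) with hσ
  have hσn : 0 ≤ σ := Real.sqrt_nonneg _
  set lam : ℕ → ℝ := fun m => 3 * Real.sqrt (∑ j, (aSeq a m j)^2) with hlam
  have hlamn : ∀ m, 0 ≤ lam m := fun m => by
    rw [hlam]; positivity
  have hlamle : ∀ m, lam m ≤ 3 * σ * (1/4)^m := by
    intro m
    rw [hlam]
    simp only
    have := aSeq_sqrt_le a m
    rw [← hσ] at this
    nlinarith
  set G : (Fin n → Bool) → ℝ :=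
    fun x => (∑ m ∈ Finset.range n, clamp (lam m) (lin (aSeq a m) x))
      + lin (aSeq a n) x with hG
  set h : (Fin n → Bool) → ℝ := fun x => cubeMean f + G x with hh
  -- mean of h
  have hsumG : ∑ x : Fin n → Bool, G x = 0 := by
    rw [hG]
    simp only
    rw [Finset.sum_add_distrib, sum_lin, Finset.sum_comm]
    rw [Finset.sum_congr rfl (fun m _ => sum_clamp_lin (lam m) (hlamn m) (aSeq a m))]
    simp
  have hmean : walshCoeff h ∅ = walshCoeff f ∅ := by
    rw [walshCoeff_empty, walshCoeff_empty]
    congr 1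
    rw [hh]
    simp only
    rw [Finset.sum_add_distrib, sum_const_cube, hsumG, add_zero,
      show cubeMean f = (∑ x : Fin n → Bool, f x) / 2^n from rfl]
    have h2n : ((2:ℝ)^n) ≠ 0 := by positivity
    field_simp
  -- level-one coefficients of h
  have hcoeffs : ∀ i, walshCoeff h {i} = walshCoeff f {i} := by
    intro i
    have e0 : walshCoeff h {i} = walshCoeff (fun _ => cubeMean f) {i}
        + (walshCoeff (fun x => ∑ m ∈ Finset.range n,
            clamp (lam m) (lin (aSeq a m) x)) {i}
          + walshCoeff (lin (aSeq a n)) {i}) := by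
      rw [← walshCoeff_add, ← walshCoeff_add]
    rw [e0, walshCoeff_const, walshCoeff_sum_fun, walshCoeff_lin]
    have e1 : ∀ m, walshCoeff (fun x => clamp (lam m) (lin (aSeq a m) x)) {i}
        = aSeq a m i - aSeq a (m+1) i := by
      intro m
      have : aSeq a (m+1) i = aSeq a m i -
          walshCoeff (fun x => clamp (3 * Real.sqrt (∑ j, (aSeq a m j)^2))
            (lin (aSeq a m) x)) {i} := rfl
      rw [hlam]
      simp only
      rw [this]
      ring
    rw [Finset.sum_congr rfl (fun m _ => e1 m), Finset.sum_range_sub' (fun m => aSeq a m i)]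
    have : aSeq a 0 i = a i := rfl
    rw [this, ha]
    ring
  -- sup bound
  have hsup : ∀ x : Fin n → Bool, |h x| ≤ |cubeMean f| + 5 * σ := by
    intro x
    have hG1 : |∑ m ∈ Finset.range n, clamp (lam m) (lin (aSeq a m) x)| ≤ 4 * σ := by
      refine le_trans (Finset.abs_sum_le_sum_abs _ _) ?_
      calc ∑ m ∈ Finset.range n, |clamp (lam m) (lin (aSeq a m) x)|
          ≤ ∑ m ∈ Finset.range n, 3 * σ * (1/4)^m := by
            apply Finset.sum_le_sum
            intro m _
            exact le_trans (clamp_abs_le _ _ (hlamn m)) (hlamle m)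
        _ = 3 * σ * ∑ m ∈ Finset.range n, ((1:ℝ)/4)^m := by rw [Finset.mul_sum]
        _ ≤ 4 * σ := by nlinarith [geom_quarter n, hσn,
            Finset.sum_nonneg (fun m (_ : m ∈ Finset.range n) =>
              pow_nonneg (by norm_num : (0:ℝ) ≤ 1/4) m)]
    have hG2 : |lin (aSeq a n) x| ≤ σ := by
      refine le_trans (lin_abs_le _ _) ?_
      have haσ : ∀ j, |a j| ≤ σ := by
        intro j
        rw [← Real.sqrt_sq_eq_abs, hσ]
        apply Real.sqrt_le_sqrt
        exact Finset.single_le_sum (fun j _ => sq_nonneg (a j)) (Finset.mem_univ j)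
      calc ∑ j, |aSeq a n j| ≤ ∑ j : Fin n, σ * (1/4)^n := by
            apply Finset.sum_le_sum
            intro j _
            refine le_trans (aSeq_le a n j) ?_
            have := haσ j
            have h4 : (0:ℝ) ≤ (1/4)^n := by positivity
            nlinarith
        _ = n * (σ * (1/4)^n) := by
            rw [Finset.sum_const, Finset.card_univ, Fintype.card_fin, nsmul_eq_mul]
        _ ≤ σ := by
            have hn4 : (n:ℝ) * (1/4)^n ≤ 1 := by
              have h1 : (n:ℝ) ≤ 4^n := by
                have := Nat.lt_pow_self (n := n) (by norm_num : 1 < 4)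
                exact_mod_cast this.le
              have h2 : ((1:ℝ)/4)^n = 1/4^n := by
                rw [div_pow, one_pow]
              rw [h2]
              rw [mul_one_div, div_le_one (by positivity)]
              exact h1
            nlinarith
    calc |h x| ≤ |cubeMean f| + |G x| := by rw [hh]; exact abs_add_le _ _
      _ ≤ |cubeMean f| + (4*σ + σ) := by
          rw [hG]
          refine add_le_add le_rfl (le_trans (abs_add_le _ _) ?_)
          linarith
      _ = |cubeMean f| + 5 * σ := by ring
  refine le_trans (distFromTail_le (ENNReal.ofReal r) f h hmean hcoeffs) ?_
  exact cubeNorm_le_of_abs_le r hr h _ hsup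

end Stmt2Aux
/-- upper bound in the dual Hitczenko theorem for the `L_r` distance
from the tail space `𝒫_{>1}^n`, `1 < r < ∞`. -/
theorem stmt_2 : ∃ C : ℝ, 0 < C ∧
    ∀ n : ℕ, ∀ hn : 1 ≤ n, ∀ r : ℝ, 1 < r → ∀ f : (Fin n → Bool) → ℝ,
      distFromTail 1 (ENNReal.ofReal r) f ≤
        C * (|cubeMean f|
          + (Finset.univ : Finset (Fin n)).sup' ⟨⟨0, hn⟩, Finset.mem_univ _⟩
              (fun i => |walshCoeff f {i}|)
          + Real.sqrt ((r - 1) / r) * Real.sqrt (∑ i : Fin n, (walshCoeff f {i}) ^ 2)) := by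
  refine ⟨10, by norm_num, ?_⟩
  intro n hn r hr f
  open Stmt2Aux in
  set M : ℝ := (Finset.univ : Finset (Fin n)).sup' ⟨⟨0, hn⟩, Finset.mem_univ _⟩
      (fun i => |walshCoeff f {i}|) with hMdef
  set σ : ℝ := Real.sqrt (∑ i : Fin n, (walshCoeff f {i}) ^ 2) with hσdef
  set s : ℝ := Real.sqrt ((r - 1) / r) with hsdef
  have hσn : 0 ≤ σ := Real.sqrt_nonneg _
  have hsn : 0 ≤ s := Real.sqrt_nonneg _
  have hMa : ∀ i, |walshCoeff f {i}| ≤ M := fun i =>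
    Finset.le_sup' (fun i => |walshCoeff f {i}|) (Finset.mem_univ i)
  have hM0 : 0 ≤ M := le_trans (abs_nonneg _) (hMa ⟨0, hn⟩)
  have hsσ : 0 ≤ s * σ := mul_nonneg hsn hσn
  have ha0 : 0 ≤ |cubeMean f| := abs_nonneg _
  rcases le_or_gt 2 r with hr2 | hr2
  · -- case r ≥ 2 : truncation construction
    have hd := Stmt2Aux.clamp_main f r (by linarith)
    rw [← hσdef] at hd
    have hshalf : 1/2 ≤ s := by
      rw [hsdef]
      have h1 : (1:ℝ)/2 = Real.sqrt (1/4) := by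
        rw [show (1:ℝ)/4 = (1/2)^2 by norm_num, Real.sqrt_sq (by norm_num : (0:ℝ) ≤ 1/2)]
      rw [h1]
      apply Real.sqrt_le_sqrt
      rw [div_le_div_iff₀ (by norm_num) (by linarith : (0:ℝ) < r)]
      linarith
    have h5 : 5 * σ ≤ 10 * (s * σ) := by nlinarith
    calc distFromTail 1 (ENNReal.ofReal r) f ≤ |cubeMean f| + 5 * σ := hd
      _ ≤ 10 * (|cubeMean f| + M + s * σ) := by linarith
  · rcases eq_or_lt_of_le hM0 with hM0' | hMpos
    · -- degenerate case : all level-one coefficients vanish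
      have hz : ∀ i : Fin n, walshCoeff f {i} = 0 := by
        intro i
        have := hMa i
        rw [← hM0'] at this
        exact abs_eq_zero.1 (le_antisymm this (abs_nonneg _))
      have hσ0 : σ = 0 := by
        rw [hσdef]
        rw [Finset.sum_congr rfl (fun i _ => by rw [hz i]; norm_num : ∀ i ∈ Finset.univ,
          (walshCoeff f {i})^2 = 0)]
        simp
      have hd := Stmt2Aux.clamp_main f r hr.le
      rw [← hσdef] at hd
      rw [hσ0] at hd
      calc distFromTail 1 (ENNReal.ofReal r) f ≤ |cubeMean f| + 5 * 0 := hd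
        _ ≤ 10 * (|cubeMean f| + M + s * σ) := by nlinarith
    · -- main case 1 < r < 2 : Riesz product construction
      have hd := Stmt2Aux.riesz_main r hr hr2 f M hMpos hMa
      rw [← hσdef, ← hsdef] at hd
      have hE2 : Real.exp (1/2) ≤ 2 := by
        have h1 : Real.exp (1/2) * Real.exp (1/2) = Real.exp 1 := by
          rw [← Real.exp_add]; norm_num
        nlinarith [Real.exp_one_lt_d9, Real.exp_pos ((1:ℝ)/2)]
      have hsqrt2 : Real.sqrt 2 ≤ 2 := by
        nlinarith [Real.sq_sqrt (by norm_num : (0:ℝ) ≤ 2), Real.sqrt_nonneg 2]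
      have t1 : Real.sqrt 2 * (s*σ) ≤ 2*(s*σ) := mul_le_mul_of_nonneg_right hsqrt2 hsσ
      have h0 : 0 ≤ |cubeMean f| + M + Real.sqrt 2 * (s*σ) := by
        have := mul_nonneg (Real.sqrt_nonneg 2) hsσ
        linarith
      have key : Real.exp (1/2) * (|cubeMean f| + M + Real.sqrt 2 * (s * σ))
          ≤ 2*|cubeMean f| + 2*M + 4*(s*σ) := by
        calc Real.exp (1/2) * (|cubeMean f| + M + Real.sqrt 2 * (s * σ))
            ≤ 2 * (|cubeMean f| + M + Real.sqrt 2 * (s * σ)) :=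
              mul_le_mul_of_nonneg_right hE2 h0
          _ ≤ 2*|cubeMean f| + 2*M + 4*(s*σ) := by linarith
      calc distFromTail 1 (ENNReal.ofReal r) f
          ≤ Real.exp (1/2) * (|cubeMean f| + M + Real.sqrt 2 * (s * σ)) := hd
        _ ≤ 2*|cubeMean f| + 2*M + 4*(s*σ) := key
        _ ≤ 10 * (|cubeMean f| + M + s * σ) := by linarith
end
end

section
/- There exist universal constants 0 < c ≤ C such that for every n ≥ 1 and every function f : {-1,1}^n → ℝ, c · ( |E f| + (Σ_{i=1}^n f̂({i})²)^{1/2} ) ≤ inf_{g ∈ P_{>1}^n} ‖f − g‖_∞ ≤ C · ( |E f| + (Σ_{i=1}^n f̂({i})²)^{1/2} ), where E f denotes the mean of f on {-1,1}^n. -/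
open Finset
open scoped ENNReal

noncomputable section

def bsgn (b : Bool) : ℝ := if b then 1 else -1

lemma walsh_singleton {n : ℕ} (i : Fin n) (x : Fin n → Bool) :
    walsh n {i} x = bsgn (x i) := by simp [walsh, bsgn]

lemma sum_pi_bool {n : ℕ} {β : Type*} [CommRing β] (h : Fin n → Bool → β) :
    ∑ x : Fin n → Bool, ∏ i, h i (x i) = ∏ i, (h i true + h i false) := by
  have := (Finset.prod_univ_sum (fun _ : Fin n => (Finset.univ : Finset Bool)) h).symm
  simp only [Fintype.piFinset_univ] at this
  rw [this]
  exact Finset.prod_congr rfl (fun i _ => by simp [Fintype.sum_bool])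

lemma sum_bsgn {n : ℕ} (i : Fin n) : ∑ x : Fin n → Bool, bsgn (x i) = 0 := by
  have h := sum_pi_bool (n := n) (fun j b => if j = i then bsgn b else 1)
  simp only [Finset.prod_ite_eq', Finset.mem_univ, if_true] at h
  rw [h]
  apply Finset.prod_eq_zero (Finset.mem_univ i)
  simp [bsgn]

lemma sum_bsgn_mul {n : ℕ} (i j : Fin n) :
    ∑ x : Fin n → Bool, bsgn (x i) * bsgn (x j) =
      if i = j then (2:ℝ) ^ n else 0 := by
  rcases eq_or_ne i j with rfl | hij
  · simp only [if_pos rfl]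
    have : ∀ x : Fin n → Bool, bsgn (x i) * bsgn (x i) = 1 := by
      intro x; cases hx : x i <;> simp [bsgn, hx]
    rw [Finset.sum_congr rfl (fun x _ => this x)]
    simp [Finset.card_univ]
  · simp only [if_neg hij]
    have h := sum_pi_bool (n := n)
      (fun k b => (if k = i then bsgn b else 1) * (if k = j then bsgn b else 1))
    have e1 : ∀ x : Fin n → Bool,
        bsgn (x i) * bsgn (x j) =
        ∏ k, (if k = i then bsgn (x k) else 1) * (if k = j then bsgn (x k) else 1) := by
      intro x
      rw [Finset.prod_mul_distrib]
      simp [Finset.prod_ite_eq']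
    rw [Finset.sum_congr rfl (fun x _ => e1 x), h]
    apply Finset.prod_eq_zero (Finset.mem_univ i)
    simp [if_neg hij, bsgn]

lemma cubeNorm_top_eq {n : ℕ} (h : (Fin n → Bool) → ℝ) :
    cubeNorm ⊤ h = Finset.univ.sup' Finset.univ_nonempty (fun x => |h x|) := by
  simp [cubeNorm]

lemma abs_le_cubeNorm_top {n : ℕ} (h : (Fin n → Bool) → ℝ) (x : Fin n → Bool) :
    |h x| ≤ cubeNorm ⊤ h := by
  rw [cubeNorm_top_eq]
  exact Finset.le_sup' (fun x => |h x|) (Finset.mem_univ x)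

lemma cubeNorm_top_nonneg {n : ℕ} (h : (Fin n → Bool) → ℝ) : 0 ≤ cubeNorm ⊤ h :=
  le_trans (abs_nonneg _) (abs_le_cubeNorm_top h (Classical.arbitrary _))

lemma cubeNorm_top_le {n : ℕ} (h : (Fin n → Bool) → ℝ) (B : ℝ) (hB : ∀ x, |h x| ≤ B) :
    cubeNorm ⊤ h ≤ B := by
  rw [cubeNorm_top_eq]
  exact Finset.sup'_le _ _ (fun x _ => hB x)

lemma abs_cubeMean_le {n : ℕ} (h : (Fin n → Bool) → ℝ) :
    |cubeMean h| ≤ cubeNorm ⊤ h := by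
  rw [cubeMean, abs_div, abs_of_pos (by positivity : (0:ℝ) < 2 ^ n), div_le_iff₀ (by positivity)]
  calc |∑ x : Fin n → Bool, h x| ≤ ∑ x : Fin n → Bool, |h x| := Finset.abs_sum_le_sum_abs _ _
    _ ≤ ∑ _x : Fin n → Bool, cubeNorm ⊤ h :=
        Finset.sum_le_sum (fun x _ => abs_le_cubeNorm_top h x)
    _ = cubeNorm ⊤ h * 2 ^ n := by
        rw [Finset.sum_const, Finset.card_univ]
        simp [mul_comm]

lemma level1_le_cubeNorm_top {n : ℕ} (ψ : (Fin n → Bool) → ℝ) :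
    Real.sqrt (∑ i : Fin n, (walshCoeff ψ {i}) ^ 2) ≤ cubeNorm ⊤ ψ := by
  set a : Fin n → ℝ := fun i => walshCoeff ψ {i} with ha
  set σ : ℝ := Real.sqrt (∑ i, a i ^ 2) with hσ
  set M : ℝ := cubeNorm ⊤ ψ with hM
  have hσnn : 0 ≤ σ := Real.sqrt_nonneg _
  have hMnn : 0 ≤ M := cubeNorm_top_nonneg ψ
  have hσ2 : σ ^ 2 = ∑ i, a i ^ 2 := Real.sq_sqrt (by positivity)
  rcases eq_or_lt_of_le hσnn with h0 | hσpos
  · rw [← h0]; exact hMnn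
  set T : (Fin n → Bool) → ℝ := fun x => ∑ i, a i * bsgn (x i) with hT
  -- ∑_x T x ^ 2 = 2^n * σ^2
  have hT2 : ∑ x : Fin n → Bool, T x ^ 2 = 2 ^ n * σ ^ 2 := by
    have e1 : ∀ x : Fin n → Bool, T x ^ 2
        = ∑ i, ∑ j, (a i * a j) * (bsgn (x i) * bsgn (x j)) := by
      intro x
      rw [hT, sq, Finset.sum_mul_sum]
      exact Finset.sum_congr rfl (fun i _ => Finset.sum_congr rfl (fun j _ => by ring))
    rw [Finset.sum_congr rfl (fun x _ => e1 x)]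
    rw [Finset.sum_comm]
    have e2 : ∀ i : Fin n, ∑ x : Fin n → Bool, ∑ j, (a i * a j) * (bsgn (x i) * bsgn (x j))
        = 2 ^ n * a i ^ 2 := by
      intro i
      rw [Finset.sum_comm]
      have e3 : ∀ j : Fin n, ∑ x : Fin n → Bool, (a i * a j) * (bsgn (x i) * bsgn (x j))
          = if i = j then 2 ^ n * a i ^ 2 else 0 := by
        intro j
        rw [← Finset.mul_sum, sum_bsgn_mul i j]
        rcases eq_or_ne i j with rfl | hij
        · simp; ring
        · simp [if_neg hij]
      rw [Finset.sum_congr rfl (fun j _ => e3 j), Finset.sum_ite_eq]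
      simp
    rw [Finset.sum_congr rfl (fun i _ => e2 i), ← Finset.mul_sum, hσ2]
  -- σ² = E[ψ T]
  have hcoeff : ∀ i : Fin n, a i = (∑ x : Fin n → Bool, ψ x * bsgn (x i)) / 2 ^ n := by
    intro i
    rw [ha]
    simp only [walshCoeff]
    congr 1
    exact Finset.sum_congr rfl (fun x _ => by rw [walsh_singleton])
  have hpair : σ ^ 2 = (∑ x : Fin n → Bool, ψ x * T x) / 2 ^ n := by
    rw [hσ2]
    have : ∀ x : Fin n → Bool, ψ x * T x = ∑ i, (ψ x * bsgn (x i)) * a i := by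
      intro x
      rw [hT, Finset.mul_sum]
      exact Finset.sum_congr rfl (fun i _ => by ring)
    rw [Finset.sum_congr rfl (fun x _ => this x), Finset.sum_comm]
    rw [Finset.sum_div]
    refine Finset.sum_congr rfl (fun i _ => ?_)
    rw [← Finset.sum_mul, sq, hcoeff i]
    field_simp
  -- ∑_x |T x| ≤ 2^n σ
  have habsT : ∑ x : Fin n → Bool, |T x| ≤ 2 ^ n * σ := by
    have hcs := Finset.sum_mul_sq_le_sq_mul_sq Finset.univ (fun x : Fin n → Bool => |T x|)
      (fun _ => (1:ℝ))
    simp only [mul_one, one_pow, Finset.sum_const, Finset.card_univ, nsmul_eq_mul] at hcs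
    have : ∑ x : Fin n → Bool, |T x| ^ 2 = 2 ^ n * σ ^ 2 := by
      rw [← hT2]
      exact Finset.sum_congr rfl (fun x _ => sq_abs _)
    rw [this, Fintype.card_fun, Fintype.card_fin, Fintype.card_bool] at hcs
    have hnn : 0 ≤ ∑ x : Fin n → Bool, |T x| :=
      Finset.sum_nonneg (fun x _ => abs_nonneg _)
    push_cast at hcs
    have h1 : (∑ x : Fin n → Bool, |T x|) ^ 2 ≤ ((2:ℝ) ^ n * σ) ^ 2 := by
      rw [mul_pow]; nlinarith [hcs]
    have h2 : (0:ℝ) ≤ (2:ℝ) ^ n * σ := mul_nonneg (by positivity) hσnn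
    calc ∑ x : Fin n → Bool, |T x| = Real.sqrt ((∑ x : Fin n → Bool, |T x|) ^ 2) :=
          (Real.sqrt_sq hnn).symm
      _ ≤ Real.sqrt (((2:ℝ) ^ n * σ) ^ 2) := Real.sqrt_le_sqrt h1
      _ = (2:ℝ) ^ n * σ := Real.sqrt_sq h2
  -- combine
  have key : σ ^ 2 ≤ M * σ := by
    rw [hpair, div_le_iff₀ (by positivity : (0:ℝ) < 2 ^ n)]
    calc ∑ x : Fin n → Bool, ψ x * T x ≤ ∑ x : Fin n → Bool, |ψ x * T x| :=
          Finset.sum_le_sum (fun x _ => le_abs_self _)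
      _ = ∑ x : Fin n → Bool, |ψ x| * |T x| := by
          exact Finset.sum_congr rfl (fun x _ => abs_mul _ _)
      _ ≤ ∑ x : Fin n → Bool, M * |T x| :=
          Finset.sum_le_sum (fun x _ =>
            mul_le_mul_of_nonneg_right (abs_le_cubeNorm_top ψ x) (abs_nonneg _))
      _ = M * ∑ x : Fin n → Bool, |T x| := by rw [Finset.mul_sum]
      _ ≤ M * (2 ^ n * σ) := mul_le_mul_of_nonneg_left habsT hMnn
      _ = M * σ * 2 ^ n := by ring
  nlinarith [key, hσpos]


lemma prod_exp {n : ℕ} (s : Fin n → ℝ) (x : Fin n → Bool) :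
    ∏ j, ((Real.cos (s j) : ℂ) + bsgn (x j) * Real.sin (s j) * Complex.I)
      = Complex.exp ((∑ j, s j * bsgn (x j) : ℝ) * Complex.I) := by
  rw [Complex.ofReal_sum, Finset.sum_mul, Complex.exp_sum]
  refine Finset.prod_congr rfl (fun j _ => ?_)
  cases hb : x j
  · simp only [bsgn, hb, Bool.false_eq_true, if_false]
    have h1 : ((Real.cos (s j) : ℂ) + ((-1:ℝ) : ℂ) * Real.sin (s j) * Complex.I)
        = Complex.cos (-(s j : ℂ)) + Complex.sin (-(s j : ℂ)) * Complex.I := by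
      push_cast
      rw [Complex.cos_neg, Complex.sin_neg]
      ring
    rw [h1, ← Complex.exp_mul_I]
    congr 1
    push_cast
    ring
  · simp only [bsgn, hb, if_true]
    have h1 : ((Real.cos (s j) : ℂ) + ((1:ℝ) : ℂ) * Real.sin (s j) * Complex.I)
        = Complex.cos (s j : ℂ) + Complex.sin (s j : ℂ) * Complex.I := by
      push_cast
      ring
    rw [h1, ← Complex.exp_mul_I]
    congr 1
    push_cast
    ring

lemma sum_sin_eq {n : ℕ} (s : Fin n → ℝ) :
    ∑ x : Fin n → Bool, Real.sin (∑ j, s j * bsgn (x j)) = 0 := by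
  have key : ∑ x : Fin n → Bool,
      Complex.exp ((∑ j, s j * bsgn (x j) : ℝ) * Complex.I)
      = ∏ j, ((2 : ℂ) * Real.cos (s j)) := by
    rw [Finset.sum_congr rfl (fun x _ => (prod_exp s x).symm)]
    rw [sum_pi_bool (fun j b => (Real.cos (s j) : ℂ) + bsgn b * Real.sin (s j) * Complex.I)]
    refine Finset.prod_congr rfl (fun j _ => ?_)
    simp [bsgn]; ring
  have him : ∀ x : Fin n → Bool, Real.sin (∑ j, s j * bsgn (x j))
      = (Complex.exp ((∑ j, s j * bsgn (x j) : ℝ) * Complex.I)).im :=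
    fun x => (Complex.exp_ofReal_mul_I_im _).symm
  rw [Finset.sum_congr rfl (fun x _ => him x), ← Complex.im_sum, key]
  have : ∏ j, ((2 : ℂ) * Real.cos (s j)) = ((∏ j, 2 * Real.cos (s j) : ℝ) : ℂ) := by
    push_cast; rfl
  rw [this, Complex.ofReal_im]

lemma sum_bsgn_sin {n : ℕ} (s : Fin n → ℝ) (i : Fin n) :
    ∑ x : Fin n → Bool, bsgn (x i) * Real.sin (∑ j, s j * bsgn (x j))
      = 2 ^ n * (Real.sin (s i) * ∏ j ∈ Finset.univ.erase i, Real.cos (s j)) := by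
  have key : ∑ x : Fin n → Bool,
      ((bsgn (x i) : ℂ) * Complex.exp ((∑ j, s j * bsgn (x j) : ℝ) * Complex.I))
      = ∏ j, ((2 : ℂ) * (if j = i then Real.sin (s i) * Complex.I else (Real.cos (s j) : ℂ))) := by
    rw [Finset.sum_congr rfl (fun x _ => by rw [← prod_exp s x])]
    have e1 : ∀ x : Fin n → Bool,
        (bsgn (x i) : ℂ) * ∏ j, ((Real.cos (s j) : ℂ) + bsgn (x j) * Real.sin (s j) * Complex.I)
        = ∏ j, ((if j = i then (bsgn (x j) : ℂ) else 1) *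
            ((Real.cos (s j) : ℂ) + bsgn (x j) * Real.sin (s j) * Complex.I)) := by
      intro x
      rw [Finset.prod_mul_distrib, Finset.prod_ite_eq']
      simp
    rw [Finset.sum_congr rfl (fun x _ => e1 x),
      sum_pi_bool (fun j b => (if j = i then (bsgn b : ℂ) else 1) *
        ((Real.cos (s j) : ℂ) + bsgn b * Real.sin (s j) * Complex.I))]
    refine Finset.prod_congr rfl (fun j _ => ?_)
    rcases eq_or_ne j i with rfl | hj
    · simp [bsgn]; ring
    · simp [bsgn, if_neg hj]; ring
  have him : ∀ x : Fin n → Bool, bsgn (x i) * Real.sin (∑ j, s j * bsgn (x j))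
      = ((bsgn (x i) : ℂ) * Complex.exp ((∑ j, s j * bsgn (x j) : ℝ) * Complex.I)).im := by
    intro x
    rw [Complex.mul_im, Complex.ofReal_re, Complex.ofReal_im, Complex.exp_ofReal_mul_I_im]
    ring
  rw [Finset.sum_congr rfl (fun x _ => him x), ← Complex.im_sum, key]
  have e2 : ∏ j, ((2 : ℂ) * (if j = i then Real.sin (s i) * Complex.I else (Real.cos (s j) : ℂ)))
      = (2 ^ n : ℂ) * ((Real.sin (s i) *
          (∏ j ∈ Finset.univ.erase i, Real.cos (s j)) : ℝ) * Complex.I) := by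
    rw [Finset.prod_mul_distrib, Finset.prod_const]
    rw [← Finset.mul_prod_erase Finset.univ _ (Finset.mem_univ i)]
    rw [if_pos rfl]
    rw [Finset.prod_congr rfl (fun j hj => if_neg (Finset.ne_of_mem_erase hj))]
    push_cast
    simp [Finset.card_univ]
    ring
  rw [e2]
  have : (2 ^ n : ℂ) * ((Real.sin (s i) *
        (∏ j ∈ Finset.univ.erase i, Real.cos (s j)) : ℝ) * Complex.I)
      = ((2 ^ n * (Real.sin (s i) * ∏ j ∈ Finset.univ.erase i, Real.cos (s j)) : ℝ) : ℂ)
        * Complex.I := by push_cast; ring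
  rw [this, Complex.mul_I_im, Complex.ofReal_re]

lemma exp_neg_half_ge : (1/2 : ℝ) ≤ Real.exp (-(1/2)) := by
  have h1 : Real.exp (1/2) ≤ 2 := by
    rw [Real.exp_half]
    have h2 : Real.exp 1 ≤ 4 := by
      have := Real.exp_one_lt_d9
      linarith
    calc Real.sqrt (Real.exp 1) ≤ Real.sqrt 4 := Real.sqrt_le_sqrt h2
      _ = 2 := by
          rw [show (4:ℝ) = 2^2 by norm_num, Real.sqrt_sq (by norm_num : (0:ℝ) ≤ 2)]
  rw [Real.exp_neg]
  have hp := Real.exp_pos (1/2 : ℝ)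
  have hinv : (Real.exp (1/2))⁻¹ * Real.exp (1/2) = 1 := inv_mul_cancel₀ hp.ne'
  nlinarith [inv_pos.mpr hp]

lemma exists_fixed {n : ℕ} (c : Fin n → ℝ) (hc : ∑ i, c i ^ 2 ≤ 1/4) :
    ∃ s : Fin n → ℝ, ∀ i, Real.sin (s i) * ∏ j ∈ Finset.univ.erase i, Real.cos (s j) = c i := by
  set F : ℝ → ℝ := fun t => ∏ i, t / Real.sqrt (t^2 + c i ^2) with hF
  have hden : ∀ (t : ℝ), t ∈ Set.Icc (1/2 : ℝ) 1 → ∀ i : Fin n,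
      Real.sqrt (t^2 + c i ^2) ≠ 0 := by
    intro t ht i
    have : (0:ℝ) < t^2 + c i ^2 := by nlinarith [ht.1, sq_nonneg (c i)]
    positivity
  have hcont : ContinuousOn (fun t => F t - t) (Set.Icc (1/2 : ℝ) 1) := by
    apply ContinuousOn.sub _ continuousOn_id
    apply continuousOn_finset_prod
    intro i _
    exact ContinuousOn.div continuousOn_id
      (((continuous_pow 2).add continuous_const).sqrt.continuousOn)
      (fun t ht => hden t ht i)
  have hF1 : F 1 ≤ 1 := by
    apply Finset.prod_le_one
    · intro i _
      positivity
    · intro i _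
      rw [div_le_one (lt_of_le_of_ne (Real.sqrt_nonneg _)
        (Ne.symm (hden 1 (by norm_num) i)))]
      calc (1:ℝ) = Real.sqrt (1^2) := by
              rw [Real.sqrt_sq]; norm_num
        _ ≤ Real.sqrt (1^2 + c i ^2) := Real.sqrt_le_sqrt (by nlinarith [sq_nonneg (c i)])
  have hFhalf : (1/2 : ℝ) ≤ F (1/2) := by
    have hfac : ∀ i : Fin n, Real.exp (-(2 * c i ^2)) ≤ (1/2) / Real.sqrt ((1/2)^2 + c i ^2) := by
      intro i
      have hs : Real.sqrt ((1/2)^2 + c i ^2) ≤ (1/2) * Real.exp (2 * c i ^2) := by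
        have h4 : (1/2:ℝ)^2 + c i ^2 ≤ ((1/2) * Real.exp (2 * c i ^2))^2 := by
          have := Real.add_one_le_exp (4 * c i ^2)
          have hsq : Real.exp (2 * c i ^2) * Real.exp (2 * c i ^2) = Real.exp (4 * c i ^2) := by
            rw [← Real.exp_add]; ring_nf
          nlinarith [Real.exp_pos (2 * c i ^2)]
        calc Real.sqrt ((1/2)^2 + c i ^2) ≤ Real.sqrt (((1/2) * Real.exp (2 * c i ^2))^2) :=
              Real.sqrt_le_sqrt h4
          _ = (1/2) * Real.exp (2 * c i ^2) := Real.sqrt_sq (by positivity)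
      rw [le_div_iff₀ (lt_of_le_of_ne (Real.sqrt_nonneg _)
        (Ne.symm (hden (1/2) (by norm_num) i)))]
      calc Real.exp (-(2 * c i ^2)) * Real.sqrt ((1/2)^2 + c i ^2)
          ≤ Real.exp (-(2 * c i ^2)) * ((1/2) * Real.exp (2 * c i ^2)) := by
            apply mul_le_mul_of_nonneg_left hs (Real.exp_pos _).le
        _ = 1/2 := by rw [← mul_assoc, mul_comm (Real.exp _), mul_assoc, ← Real.exp_add]; simp
    calc (1/2 : ℝ) ≤ Real.exp (-(1/2)) := exp_neg_half_ge
      _ ≤ Real.exp (-(2 * ∑ i, c i ^2)) := by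
          apply Real.exp_le_exp.mpr; linarith
      _ = ∏ i, Real.exp (-(2 * c i ^2)) := by
          rw [← Real.exp_sum]
          congr 1
          simp [Finset.mul_sum]
      _ ≤ F (1/2) := by
          apply Finset.prod_le_prod
          · intro i _; exact (Real.exp_pos _).le
          · intro i _; exact hfac i
  obtain ⟨t, htmem, ht⟩ : ∃ t ∈ Set.Icc (1/2:ℝ) 1, F t - t = 0 := by
    have h0 : (0:ℝ) ∈ Set.Icc (F 1 - 1) (F (1/2) - 1/2) := by
      constructor <;> [linarith; linarith]
    have := intermediate_value_Icc' (by norm_num : (1/2:ℝ) ≤ 1) hcont h0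
    obtain ⟨t, htmem, ht⟩ := this
    exact ⟨t, htmem, ht⟩
  have htpos : (0:ℝ) < t := lt_of_lt_of_le (by norm_num) htmem.1
  have htF : F t = t := by linarith [sub_eq_zero.mp ht]
  set s : Fin n → ℝ := fun i => Real.arctan (c i / t) with hs
  refine ⟨s, fun i => ?_⟩
  have hcos : ∀ j : Fin n, Real.cos (s j) = t / Real.sqrt (t^2 + c j ^2) := by
    intro j
    rw [hs]
    rw [Real.cos_arctan]
    have h1 : 1 + (c j / t)^2 = (t^2 + c j ^2) / t^2 := by field_simp
    rw [h1, Real.sqrt_div (by positivity) (t^2), Real.sqrt_sq htpos.le]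
    rw [one_div, inv_div]
  have hprod : ∏ j, Real.cos (s j) = t := by
    rw [Finset.prod_congr rfl (fun j _ => hcos j)]
    exact htF
  have hcosne : Real.cos (s i) ≠ 0 := by
    rw [hs]; exact (Real.cos_arctan_pos _).ne'
  have hsin : Real.sin (s i) = Real.tan (s i) * Real.cos (s i) := by
    rw [Real.tan_eq_sin_div_cos, div_mul_cancel₀ _ hcosne]
  have htan : Real.tan (s i) = c i / t := by rw [hs]; exact Real.tan_arctan _
  rw [hsin, mul_assoc,
    Finset.mul_prod_erase Finset.univ (fun j => Real.cos (s j)) (Finset.mem_univ i), hprod,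
    htan, div_mul_cancel₀ _ htpos.ne']

lemma walshCoeff_empty {n : ℕ} (f : (Fin n → Bool) → ℝ) :
    walshCoeff f ∅ = cubeMean f := by
  simp [walshCoeff, cubeMean, walsh]

lemma walshCoeff_sub {n : ℕ} (u v : (Fin n → Bool) → ℝ) (S : Finset (Fin n)) :
    walshCoeff (fun x => u x - v x) S = walshCoeff u S - walshCoeff v S := by
  simp only [walshCoeff, ← sub_div, ← Finset.sum_sub_distrib]
  congr 1
  exact Finset.sum_congr rfl (fun x _ => by ring)

lemma spectrumIn_zero {n : ℕ} : spectrumIn (fun _ : Fin n → Bool => (0:ℝ)) {j | 1 < j} := by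
  intro S _
  simp [walshCoeff]


/-- two-sided estimate for the `L_∞` distance from the tail space `𝒫_{>1}^n`. -/
theorem stmt_4 : ∃ c C : ℝ, 0 < c ∧ c ≤ C ∧
    ∀ n : ℕ, 1 ≤ n → ∀ f : (Fin n → Bool) → ℝ,
      c * (|cubeMean f| + Real.sqrt (∑ i : Fin n, (walshCoeff f {i}) ^ 2)) ≤
        distFromTail 1 ⊤ f ∧
      distFromTail 1 ⊤ f ≤
        C * (|cubeMean f| + Real.sqrt (∑ i : Fin n, (walshCoeff f {i}) ^ 2)) := by

  refine ⟨1/2, 2, by norm_num, by norm_num, ?_⟩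
  intro n _hn f
  set a0 : ℝ := cubeMean f with ha0
  set σ : ℝ := Real.sqrt (∑ i : Fin n, (walshCoeff f {i}) ^ 2) with hσ
  have hσnn : 0 ≤ σ := Real.sqrt_nonneg _
  have hσ2 : σ ^ 2 = ∑ i : Fin n, (walshCoeff f {i}) ^ 2 := Real.sq_sqrt (by positivity)
  set D : Set ℝ := {t : ℝ | ∃ g : (Fin n → Bool) → ℝ,
    spectrumIn g {j | 1 < j} ∧ t = cubeNorm ⊤ (fun x => f x - g x)} with hD
  have hdist : distFromTail 1 ⊤ f = sInf D := rfl
  -- lower bound on every element of D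
  have hlb : ∀ t ∈ D, (1/2) * (|a0| + σ) ≤ t := by
    rintro t ⟨g, hg, rfl⟩
    set ψ : (Fin n → Bool) → ℝ := fun x => f x - g x with hψ
    have hm : cubeMean ψ = a0 := by
      rw [← walshCoeff_empty, hψ, walshCoeff_sub, walshCoeff_empty, walshCoeff_empty]
      have : cubeMean g = 0 := by
        rw [← walshCoeff_empty]
        exact hg ∅ (by simp)
      rw [this, sub_zero, ha0]
    have hci : ∀ i : Fin n, walshCoeff ψ {i} = walshCoeff f {i} := by
      intro i
      rw [hψ, walshCoeff_sub]
      have : walshCoeff g {i} = 0 := hg {i} (by simp)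
      rw [this, sub_zero]
    have h1 : |a0| ≤ cubeNorm ⊤ ψ := by
      rw [← hm]; exact abs_cubeMean_le ψ
    have h2 : σ ≤ cubeNorm ⊤ ψ := by
      have := level1_le_cubeNorm_top ψ
      rw [Finset.sum_congr rfl (fun i _ => by rw [hci i])] at this
      rw [hσ]
      exact this
    linarith
  have hbdd : BddBelow D := ⟨(1/2) * (|a0| + σ), fun t ht => hlb t ht⟩
  have hne : D.Nonempty :=
    ⟨cubeNorm ⊤ (fun x => f x - (fun _ => (0:ℝ)) x), ⟨fun _ => 0, spectrumIn_zero, rfl⟩⟩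
  constructor
  · rw [hdist]
    exact le_csInf hne hlb
  · -- upper bound: construct the approximant
    set c : Fin n → ℝ := fun i => if σ = 0 then 0 else walshCoeff f {i} / (2 * σ) with hc
    have hczero : ∀ i, 2 * σ * c i = walshCoeff f {i} := by
      intro i
      rcases eq_or_ne σ 0 with h0 | h0
      · have hall : ∑ i : Fin n, (walshCoeff f {i}) ^ 2 = 0 := by
          rw [← hσ2, h0]; norm_num
        have : (walshCoeff f {i}) ^ 2 = 0 :=
          (Finset.sum_eq_zero_iff_of_nonneg (fun j _ => sq_nonneg _)).mp hall i (Finset.mem_univ i)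
        have hz := pow_eq_zero_iff (n := 2) (by norm_num) |>.mp this
        simp only [hc, if_pos h0]
        rw [hz, h0]
        ring
      · simp only [hc, if_neg h0]
        field_simp
    have hcsum : ∑ i : Fin n, c i ^ 2 ≤ 1/4 := by
      rcases eq_or_ne σ 0 with h0 | h0
      · simp [hc, if_pos h0]
      · have hσpos : 0 < σ := lt_of_le_of_ne hσnn (Ne.symm h0)
        have : ∀ i : Fin n, c i ^ 2 = (walshCoeff f {i}) ^ 2 / (4 * σ ^ 2) := by
          intro i
          simp only [hc, if_neg h0, div_pow]
          congr 1
          ring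
        rw [Finset.sum_congr rfl (fun i _ => this i), ← Finset.sum_div, ← hσ2]
        rw [div_le_iff₀ (by positivity)]
        nlinarith [sq_nonneg σ]
    obtain ⟨s, hs⟩ := exists_fixed c hcsum
    set ψ : (Fin n → Bool) → ℝ :=
      fun x => a0 + 2 * σ * Real.sin (∑ j, s j * bsgn (x j)) with hψ
    have hmean : cubeMean ψ = a0 := by
      rw [cubeMean, hψ]
      rw [Finset.sum_add_distrib, Finset.sum_const, Finset.card_univ, ← Finset.mul_sum,
        sum_sin_eq s]
      simp [Fintype.card_fun]
    have hlev : ∀ i : Fin n, walshCoeff ψ {i} = walshCoeff f {i} := by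
      intro i
      rw [walshCoeff]
      have e1 : ∀ x : Fin n → Bool, ψ x * walsh n {i} x
          = a0 * bsgn (x i) + 2 * σ * (bsgn (x i) * Real.sin (∑ j, s j * bsgn (x j))) := by
        intro x
        rw [walsh_singleton, hψ]
        ring
      rw [Finset.sum_congr rfl (fun x _ => e1 x), Finset.sum_add_distrib, ← Finset.mul_sum,
        sum_bsgn i, ← Finset.mul_sum, sum_bsgn_sin s i, hs i, mul_zero, zero_add]
      rw [← hczero i]
      field_simp
    set g : (Fin n → Bool) → ℝ := fun x => f x - ψ x with hgdef
    have hg : spectrumIn g {j | 1 < j} := by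
      intro S hS
      have hcard : S.card ≤ 1 := by
        by_contra h
        exact hS (by simpa using Nat.lt_of_not_le (fun hle => h (by omega)))
      have hsub : walshCoeff g S = walshCoeff f S - walshCoeff ψ S := walshCoeff_sub f ψ S
      interval_cases h : S.card
      · have : S = ∅ := Finset.card_eq_zero.mp h
        rw [hsub, this, walshCoeff_empty, walshCoeff_empty, hmean, ha0, sub_self]
      · obtain ⟨i, rfl⟩ := Finset.card_eq_one.mp h
        rw [hsub, hlev i, sub_self]
    have hmemD : cubeNorm ⊤ (fun x => f x - g x) ∈ D := ⟨g, hg, rfl⟩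
    have heq : (fun x => f x - g x) = ψ := by
      funext x
      rw [hgdef]
      ring
    have hup : cubeNorm ⊤ ψ ≤ |a0| + 2 * σ := by
      apply cubeNorm_top_le
      intro x
      rw [hψ]
      calc |a0 + 2 * σ * Real.sin (∑ j, s j * bsgn (x j))|
          ≤ |a0| + |2 * σ * Real.sin (∑ j, s j * bsgn (x j))| := abs_add_le _ _
        _ ≤ |a0| + 2 * σ := by
            have h1 : |Real.sin (∑ j, s j * bsgn (x j))| ≤ 1 := Real.abs_sin_le_one _
            have : |2 * σ * Real.sin (∑ j, s j * bsgn (x j))|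
                = 2 * σ * |Real.sin (∑ j, s j * bsgn (x j))| := by
              rw [abs_mul, abs_of_nonneg (by positivity : (0:ℝ) ≤ 2 * σ)]
            rw [this]
            nlinarith
    rw [hdist]
    calc sInf D ≤ cubeNorm ⊤ (fun x => f x - g x) := csInf_le hbdd hmemD
      _ = cubeNorm ⊤ ψ := by rw [heq]
      _ ≤ |a0| + 2 * σ := hup
      _ ≤ 2 * (|a0| + σ) := by linarith [abs_nonneg a0]
end
end
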